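/- arXiv:2306.02086 — 9 statements merged into one kernel-verified Lean document; each statement's English description precedes it below -/
import Mathlib

section
/- Let (Ω, Σ, μ) be a semifinite, decomposable measure space with μ ≠ 0 and let 𝒰 be an ultrafilter on the measure algebra of (Ω, μ). Then for every measurable essentially bounded f : Ω → ℂ there exists a ∈ ℂ such that lim_𝒰 f = a. -/
/-!
The members of `𝒰` generate a proper filter on `Ω` which decides every measurable set. Since `f`
eventually takes values in a compact ball, its image filter has a cluster point `a`; as preimages
of open sets are measurable, the filter decides them too, which forces `f → a` along it. Finally,
on a member of `𝒰` where `f` stays in the closed `ε`-ball about `a`, every average of `f` stays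
in that closed convex ball as well.
-/

open MeasureTheory

/-- An *ultrafilter on the measure algebra* of `(Ω, μ)`: a collection of measurable,
non-null subsets of `Ω`, closed under intersection and under almost-everywhere
enlargement, containing every measurable set or its complement. -/
structure IsMeasureUltrafilter {Ω : Type*} [MeasurableSpace Ω] (μ : Measure Ω)
    (U : Set (Set Ω)) : Prop where
  measurableSet_of_mem : ∀ F ∈ U, MeasurableSet F
  not_null : ∀ F ∈ U, μ F ≠ 0
  inter_mem : ∀ F ∈ U, ∀ G ∈ U, F ∩ G ∈ U
  mem_of_ae_subset : ∀ F ∈ U, ∀ G : Set Ω, MeasurableSet G → μ (F \ G) = 0 → G ∈ U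
  mem_or_compl_mem : ∀ F : Set Ω, MeasurableSet F → F ∈ U ∨ Fᶜ ∈ U

/-- `UltraLim μ U f a` means `lim_U f = a`: for every `ε > 0` there is `F ∈ U` such that
all averages of `f` over measurable subsets of `F` of finite positive measure are within
`ε` of `a`. -/
def UltraLim {Ω : Type*} [MeasurableSpace Ω] (μ : Measure Ω) (U : Set (Set Ω))
    (f : Ω → ℂ) (a : ℂ) : Prop :=
  ∀ ε : ℝ, 0 < ε → ∃ F ∈ U, ∀ X : Set Ω, X ⊆ F → MeasurableSet X →
    0 < μ X → μ X < ⊤ → ‖(μ X).toReal⁻¹ • ∫ x in X, f x ∂μ - a‖ < ε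

/-- A measure is *semifinite* if every measurable set of infinite measure contains a
measurable subset of finite positive measure. -/
def Semifinite {Ω : Type*} [MeasurableSpace Ω] (μ : Measure Ω) : Prop :=
  ∀ E : Set Ω, MeasurableSet E → μ E = ⊤ →
    ∃ F : Set Ω, F ⊆ E ∧ MeasurableSet F ∧ 0 < μ F ∧ μ F < ⊤

universe u

/-- A measure is *decomposable* if there is a partition of `Ω` into measurable sets of
finite measure which detects measurability and along which `μ` sums. -/
def Decomposable {Ω : Type u} [MeasurableSpace Ω] (μ : Measure Ω) : Prop :=
  ∃ (ι : Type u) (P : ι → Set Ω),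
    (∀ i, MeasurableSet (P i)) ∧ (∀ i, μ (P i) < ⊤) ∧
    (Pairwise fun i j => Disjoint (P i) (P j)) ∧
    (⋃ i, P i) = Set.univ ∧
    (∀ E : Set Ω, (∀ i, MeasurableSet (E ∩ P i)) → MeasurableSet E) ∧
    (∀ E : Set Ω, MeasurableSet E → μ E = ∑' i, μ (E ∩ P i))

open Filter Topology Metric

namespace IsMeasureUltrafilter

variable {Ω : Type*} [MeasurableSpace Ω] {μ : Measure Ω} {U : Set (Set Ω)}

lemma univ_mem (hU : IsMeasureUltrafilter μ U) : Set.univ ∈ U := by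
  rcases hU.mem_or_compl_mem ∅ MeasurableSet.empty with h | h
  · exact absurd measure_empty (hU.not_null ∅ h)
  · simpa using h

def toFilter (hU : IsMeasureUltrafilter μ U) : Filter Ω where
  sets := {S | ∃ F ∈ U, F ⊆ S}
  univ_sets := ⟨Set.univ, hU.univ_mem, subset_rfl⟩
  sets_of_superset := fun ⟨F, hF, hFS⟩ hST => ⟨F, hF, hFS.trans hST⟩
  inter_sets := fun ⟨F, hF, hFS⟩ ⟨G, hG, hGT⟩ =>
    ⟨F ∩ G, hU.inter_mem F hF G hG, Set.inter_subset_inter hFS hGT⟩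

lemma mem_toFilter (hU : IsMeasureUltrafilter μ U) {S : Set Ω} :
    S ∈ hU.toFilter ↔ ∃ F ∈ U, F ⊆ S :=
  Iff.rfl

lemma mem_toFilter_of_mem (hU : IsMeasureUltrafilter μ U) {F : Set Ω} (hF : F ∈ U) :
    F ∈ hU.toFilter :=
  ⟨F, hF, subset_rfl⟩

instance toFilter_neBot (hU : IsMeasureUltrafilter μ U) : NeBot hU.toFilter := by
  refine ⟨fun h => ?_⟩
  obtain ⟨F, hF, hF_empty⟩ := hU.mem_toFilter.1 (empty_mem_iff_bot.2 h)
  exact hU.not_null F hF (by rw [Set.subset_empty_iff.1 hF_empty, measure_empty])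

lemma eventually_toFilter_of_ae (hU : IsMeasureUltrafilter μ U) {p : Ω → Prop}
    (hp : ∀ᵐ x ∂μ, p x) : ∀ᶠ x in hU.toFilter, p x := by
  obtain ⟨N, hpN, hN, hN_null⟩ := exists_measurable_superset_of_null hp
  have hNc : Nᶜ ∈ U :=
    hU.mem_of_ae_subset _ hU.univ_mem _ hN.compl (by simpa using hN_null)
  exact ⟨Nᶜ, hNc, Set.compl_subset_comm.1 hpN⟩

variable {X : Type*} [TopologicalSpace X] [MeasurableSpace X] [OpensMeasurableSpace X]

theorem tendsto_of_clusterPt (hU : IsMeasureUltrafilter μ U) {f : Ω → X} (hf : Measurable f)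
    {a : X} (ha : ClusterPt a (map f hU.toFilter)) : Tendsto f hU.toFilter (𝓝 a) := by
  intro V hV
  obtain ⟨W, hWV, hW, haW⟩ := mem_nhds_iff.1 hV
  rcases hU.mem_or_compl_mem _ (hf hW.measurableSet) with hfW | hfW
  · exact mem_of_superset (hU.mem_toFilter_of_mem hfW) (Set.preimage_mono hWV)
  · have hfWc : f ⁻¹' Wᶜ ∈ hU.toFilter := hU.mem_toFilter_of_mem hfW
    obtain ⟨y, hyW, hyWc⟩ := clusterPt_iff_nonempty.1 ha (hW.mem_nhds haW) hfWc
    exact absurd hyW hyWc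

theorem exists_tendsto_of_isCompact (hU : IsMeasureUltrafilter μ U) {f : Ω → X}
    (hf : Measurable f) {K : Set X} (hK : IsCompact K) (hfK : ∀ᶠ x in hU.toFilter, f x ∈ K) :
    ∃ a, Tendsto f hU.toFilter (𝓝 a) := by
  obtain ⟨a, -, ha⟩ := hK.exists_clusterPt (tendsto_principal.2 hfK)
  exact ⟨a, hU.tendsto_of_clusterPt hf ha⟩

end IsMeasureUltrafilter

theorem setAverage_mem_closedBall {α E : Type*} [MeasurableSpace α] {μ : Measure α}
    [NormedAddCommGroup E] [NormedSpace ℝ E] [CompleteSpace E] {f : α → E} {X : Set α}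
    (hf : AEStronglyMeasurable f (μ.restrict X)) (hX : MeasurableSet X) (hX₀ : μ X ≠ 0)
    (hX_top : μ X ≠ ⊤) {a : E} {r : ℝ} (hfX : ∀ x ∈ X, f x ∈ closedBall a r) :
    ⨍ x in X, f x ∂μ ∈ closedBall a r := by
  have hfX_ae : ∀ᵐ x ∂μ.restrict X, f x ∈ closedBall a r :=
    (ae_restrict_mem hX).mono hfX
  have hf_int : IntegrableOn f X μ :=
    ⟨hf, .restrict_of_bounded (C := ‖a‖ + r) hX_top.lt_top <| hfX_ae.mono fun x hx =>
      (norm_le_norm_add_norm_sub' (f x) a).trans (by gcongr; exact mem_closedBall_iff_norm.1 hx)⟩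
  exact (convex_closedBall a r).set_average_mem isClosed_closedBall hX₀ hX_top hfX_ae hf_int

theorem IsMeasureUltrafilter.ultraLim_of_tendsto {Ω : Type*} [MeasurableSpace Ω]
    {μ : Measure Ω} {U : Set (Set Ω)} (hU : IsMeasureUltrafilter μ U) {f : Ω → ℂ}
    (hf : AEStronglyMeasurable f μ) {a : ℂ} (hfa : Tendsto f hU.toFilter (𝓝 a)) :
    UltraLim μ U f a := by
  intro ε hε
  obtain ⟨F, hF, hF_ball⟩ := hU.mem_toFilter.1 (hfa (closedBall_mem_nhds a (half_pos hε)))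
  refine ⟨F, hF, fun X hXF hX hX₀ hX_top => ?_⟩
  have hmem := setAverage_mem_closedBall hf.restrict hX hX₀.ne' hX_top.ne
    fun x hx => hF_ball (hXF hx)
  rw [setAverage_eq, measureReal_def, mem_closedBall_iff_norm] at hmem
  linarith

theorem ultraLim_exists_general {Ω : Type u} [MeasurableSpace Ω] (μ : Measure Ω)
    (U : Set (Set Ω)) (hU : IsMeasureUltrafilter μ U)
    (f : Ω → ℂ) (hf : Measurable f) (hbdd : ∃ C : ℝ, ∀ᵐ ω ∂μ, ‖f ω‖ ≤ C) :
    ∃ a : ℂ, UltraLim μ U f a := by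
  obtain ⟨C, hC⟩ := hbdd
  have hf_ball : ∀ᶠ ω in hU.toFilter, f ω ∈ closedBall 0 C :=
    hU.eventually_toFilter_of_ae (by simpa using hC)
  obtain ⟨a, ha⟩ := hU.exists_tendsto_of_isCompact hf (isCompact_closedBall 0 C) hf_ball
  exact ⟨a, hU.ultraLim_of_tendsto hf.aestronglyMeasurable ha⟩

/-- Theorem II.3. Existence of ultrafilter limits: on a nonzero,
semifinite, decomposable measure space, every measurable essentially bounded function has a
limit along any ultrafilter on the measure algebra. -/
theorem ultraLim_exists {Ω : Type u} [MeasurableSpace Ω] (μ : Measure Ω)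
    (hμ : μ ≠ 0) (hsemi : Semifinite μ) (hdec : Decomposable μ)
    (U : Set (Set Ω)) (hU : IsMeasureUltrafilter μ U)
    (f : Ω → ℂ) (hf : Measurable f) (hbdd : ∃ C : ℝ, ∀ᵐ ω ∂μ, ‖f ω‖ ≤ C) :
    ∃ a : ℂ, UltraLim μ U f a :=
  ultraLim_exists_general μ U hU f hf hbdd
end

section
/- Let (Ω, Σ, μ) be a semifinite measure space with μ ≠ 0, let 𝒰 be an ultrafilter on the measure algebra of (Ω, μ), and let f, g : Ω → ℂ be measurable and essentially bounded with lim_𝒰 f = a and lim_𝒰 g = b. Then lim_𝒰 (f·g) = a·b. -/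
open MeasureTheory

universe u

/-!
If `lim_U f = a` then `{‖f - a‖ ≤ ε} ∈ U` for every `ε > 0`. Otherwise its complement lies in
`U`; that complement is covered by four closed half-planes at distance `ε / 2` from `a`, so the
preimage of one of them, `S`, lies in `U`. By semifiniteness `S` meets every member of `U` in a
set of finite positive measure, and the averages of `f` over subsets of `S` stay in the closed
convex half-plane, away from `a`. Conversely, averages over subsets of `{‖f - a‖ ≤ ε}` stay in
the closed disc, so `lim_U` is the limit along the sets `{‖f - a‖ ≤ ε}`, and continuity of
multiplication gives the result.
-/

open Metric

variable {Ω : Type*} [MeasurableSpace Ω] {μ : Measure Ω} {U : Set (Set Ω)}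

namespace IsMeasureUltrafilter

lemma mem_of_subset (hU : IsMeasureUltrafilter μ U) {F G : Set Ω} (hF : F ∈ U)
    (hG : MeasurableSet G) (hFG : F ⊆ G) : G ∈ U :=
  hU.mem_of_ae_subset F hF G hG (by rw [Set.sdiff_eq_empty.2 hFG, measure_empty])

lemma mem_or_mem_of_union_mem (hU : IsMeasureUltrafilter μ U) {A B : Set Ω}
    (hA : MeasurableSet A) (hB : MeasurableSet B) (hAB : A ∪ B ∈ U) : A ∈ U ∨ B ∈ U := by
  refine (hU.mem_or_compl_mem A hA).imp id fun hAc => ?_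
  refine hU.mem_of_subset (hU.inter_mem _ hAB _ hAc) hB ?_
  rintro x ⟨hx | hx, hxA⟩
  exacts [absurd hx hxA, hx]

lemma exists_mem_of_biUnion_mem (hU : IsMeasureUltrafilter μ U) {ι : Type*} {S : ι → Set Ω}
    (hS : ∀ i, MeasurableSet (S i)) (s : Finset ι) (h : ⋃ i ∈ s, S i ∈ U) :
    ∃ i ∈ s, S i ∈ U := by
  classical
  induction s using Finset.induction_on with
  | empty => exact absurd measure_empty (hU.not_null _ (by simpa using h))
  | insert j s _ ih =>
    rw [Finset.set_biUnion_insert] at h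
    rcases hU.mem_or_mem_of_union_mem (hS j) (s.measurableSet_biUnion fun i _ => hS i) h
      with hj | hs
    · exact ⟨j, Finset.mem_insert_self j s, hj⟩
    · obtain ⟨i, hi, hiU⟩ := ih hs
      exact ⟨i, Finset.mem_insert_of_mem hi, hiU⟩

lemma exists_subset_measure_pos_lt_top (hU : IsMeasureUltrafilter μ U) (hsemi : Semifinite μ)
    {F : Set Ω} (hF : F ∈ U) :
    ∃ X ⊆ F, MeasurableSet X ∧ 0 < μ X ∧ μ X < ⊤ := by
  have hFm := hU.measurableSet_of_mem F hF
  rcases eq_or_ne (μ F) ⊤ with hFtop | hFtop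
  · exact hsemi F hFm hFtop
  · exact ⟨F, subset_rfl, hFm, pos_iff_ne_zero.2 (hU.not_null F hF), hFtop.lt_top⟩

end IsMeasureUltrafilter

lemma ultraLim_iff_setAverage {f : Ω → ℂ} {a : ℂ} :
    UltraLim μ U f a ↔ ∀ ε > 0, ∃ F ∈ U, ∀ X ⊆ F, MeasurableSet X → 0 < μ X → μ X < ⊤ →
      dist (⨍ x in X, f x ∂μ) a < ε := by
  simp only [UltraLim, setAverage_eq, measureReal_def, dist_eq_norm]

lemma setAverage_mem_of_forall_mem {E : Type*} [NormedAddCommGroup E] [NormedSpace ℝ E]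
    [CompleteSpace E] {f : Ω → E} {X : Set Ω} {K : Set E} (hK : Convex ℝ K)
    (hKc : IsClosed K) (hXm : MeasurableSet X) (hX0 : 0 < μ X) (hX : μ X < ⊤)
    (hfi : IntegrableOn f X μ) (hfK : ∀ x ∈ X, f x ∈ K) : ⨍ x in X, f x ∂μ ∈ K :=
  hK.set_average_mem hKc hX0.ne' hX.ne ((ae_restrict_iff' hXm).2 (ae_of_all _ hfK)) hfi

lemma ultraLim_of_forall_preimage_closedBall_mem {f : Ω → ℂ} {a : ℂ} (hf : Measurable f)
    (h : ∀ ε > 0, f ⁻¹' closedBall a ε ∈ U) : UltraLim μ U f a := by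
  refine ultraLim_iff_setAverage.2 fun ε hε => ⟨_, h (ε / 2) (half_pos hε), ?_⟩
  intro X hXF hXm hX0 hX
  have hfX : ∀ x ∈ X, f x ∈ closedBall a (ε / 2) := fun x hx => hXF hx
  have hfi : IntegrableOn f X μ := by
    refine Measure.integrableOn_of_bounded hX.ne hf.aestronglyMeasurable (M := ‖a‖ + ε / 2) ?_
    refine (ae_restrict_iff' hXm).2 (ae_of_all _ fun x hx => ?_)
    calc ‖f x‖ ≤ ‖a‖ + ‖f x - a‖ := norm_le_norm_add_norm_sub' (f x) a
      _ ≤ ‖a‖ + ε / 2 := by gcongr; exact mem_closedBall_iff_norm.1 (hfX x hx)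
  have := setAverage_mem_of_forall_mem (convex_closedBall a (ε / 2)) isClosed_closedBall hXm
    hX0 hX hfi hfX
  exact (mem_closedBall.1 this).trans_lt (half_lt_self hε)

lemma UltraLim.preimage_not_mem (hsemi : Semifinite μ) (hU : IsMeasureUltrafilter μ U)
    {f : Ω → ℂ} {a : ℂ} (ha : UltraLim μ U f a) (hf : Measurable f)
    (hfbdd : ∃ C : ℝ, ∀ᵐ ω ∂μ, ‖f ω‖ ≤ C) {K : Set ℂ} (hK : Convex ℝ K) (hKc : IsClosed K)
    {c : ℝ} (hc : 0 < c) (hKa : ∀ z ∈ K, c ≤ dist z a) : f ⁻¹' K ∉ U := by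
  intro hKU
  obtain ⟨F, hF, hFa⟩ := ultraLim_iff_setAverage.1 ha c hc
  obtain ⟨X, hXFK, hXm, hX0, hX⟩ :=
    hU.exists_subset_measure_pos_lt_top hsemi (hU.inter_mem F hF _ hKU)
  obtain ⟨C, hC⟩ := hfbdd
  have hfi : IntegrableOn f X μ :=
    Measure.integrableOn_of_bounded hX.ne hf.aestronglyMeasurable (ae_restrict_of_ae hC)
  have hmem := setAverage_mem_of_forall_mem hK hKc hXm hX0 hX hfi fun x hx => (hXFK hx).2
  exact (hKa _ hmem).not_gt (hFa X (fun x hx => (hXFK hx).1) hXm hX0 hX)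

namespace Complex

def farHalfPlane (a : ℂ) (r : ℝ) : Fin 4 → Set ℂ :=
  ![{z | a.re + r ≤ z.re}, {z | z.re ≤ a.re - r}, {z | a.im + r ≤ z.im}, {z | z.im ≤ a.im - r}]

lemma convex_farHalfPlane (a : ℂ) (r : ℝ) (i : Fin 4) : Convex ℝ (farHalfPlane a r i) := by
  fin_cases i
  exacts [convex_halfSpace_re_ge _, convex_halfSpace_re_le _, convex_halfSpace_im_ge _,
    convex_halfSpace_im_le _]

lemma isClosed_farHalfPlane (a : ℂ) (r : ℝ) (i : Fin 4) :
    IsClosed (farHalfPlane a r i) := by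
  fin_cases i
  exacts [isClosed_le continuous_const continuous_re, isClosed_le continuous_re continuous_const,
    isClosed_le continuous_const continuous_im, isClosed_le continuous_im continuous_const]

lemma le_dist_of_mem_farHalfPlane {a z : ℂ} {r : ℝ} {i : Fin 4}
    (hz : z ∈ farHalfPlane a r i) : r ≤ dist z a := by
  have hre := abs_re_le_norm (z - a)
  have him := abs_im_le_norm (z - a)
  rw [dist_eq_norm]
  simp only [sub_re, sub_im, abs_le] at hre him
  fin_cases i <;>
    simp only [farHalfPlane, Fin.zero_eta, Fin.mk_one, Fin.reduceFinMk, Fin.isValue,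
      Matrix.cons_val_zero, Matrix.cons_val_one, Matrix.cons_val, Set.mem_ofPred_eq] at hz <;>
    linarith

lemma compl_closedBall_subset_iUnion_farHalfPlane (a : ℂ) (ε : ℝ) :
    (closedBall a ε)ᶜ ⊆ ⋃ i, farHalfPlane a (ε / 2) i := by
  intro z hz
  have hlt : ε < |(z - a).re| + |(z - a).im| :=
    (not_le.1 (mem_closedBall_iff_norm.not.1 hz)).trans_le (norm_le_abs_re_add_abs_im _)
  simp only [sub_re, sub_im] at hlt
  simp only [farHalfPlane, Set.mem_iUnion, Fin.exists_fin_succ, Fin.isValue,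
    Matrix.cons_val_zero, Set.mem_ofPred_eq, Matrix.cons_val_succ, Matrix.cons_val_fin_one,
    exists_const]
  by_contra! h
  have hre : |z.re - a.re| < ε / 2 := abs_sub_lt_iff.2 ⟨by linarith, by linarith⟩
  have him : |z.im - a.im| < ε / 2 := abs_sub_lt_iff.2 ⟨by linarith, by linarith⟩
  linarith

end Complex

open Complex in
lemma UltraLim.preimage_closedBall_mem (hsemi : Semifinite μ) (hU : IsMeasureUltrafilter μ U)
    {f : Ω → ℂ} {a : ℂ} (ha : UltraLim μ U f a) (hf : Measurable f)
    (hfbdd : ∃ C : ℝ, ∀ᵐ ω ∂μ, ‖f ω‖ ≤ C) {ε : ℝ} (hε : 0 < ε) :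
    f ⁻¹' closedBall a ε ∈ U := by
  refine (hU.mem_or_compl_mem _ (measurableSet_closedBall.preimage hf)).resolve_right ?_
  intro hcompl
  have hS i : MeasurableSet (f ⁻¹' farHalfPlane a (ε / 2) i) :=
    (isClosed_farHalfPlane a _ i).measurableSet.preimage hf
  have hcover : ⋃ i ∈ Finset.univ, f ⁻¹' farHalfPlane a (ε / 2) i ∈ U := by
    refine hU.mem_of_subset hcompl (Finset.univ.measurableSet_biUnion fun i _ => hS i) ?_
    simpa using Set.preimage_mono (compl_closedBall_subset_iUnion_farHalfPlane a ε)
  obtain ⟨i, -, hi⟩ := hU.exists_mem_of_biUnion_mem hS _ hcover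
  exact ha.preimage_not_mem hsemi hU hf hfbdd (convex_farHalfPlane a _ i)
    (isClosed_farHalfPlane a _ i) (half_pos hε) (fun z => le_dist_of_mem_farHalfPlane) hi

theorem ultraLim_mul_general {Ω : Type u} [MeasurableSpace Ω] (μ : Measure Ω)
    (hsemi : Semifinite μ)
    (U : Set (Set Ω)) (hU : IsMeasureUltrafilter μ U)
    (f g : Ω → ℂ) (hf : Measurable f) (hfbdd : ∃ C : ℝ, ∀ᵐ ω ∂μ, ‖f ω‖ ≤ C)
    (hg : Measurable g) (hgbdd : ∃ C : ℝ, ∀ᵐ ω ∂μ, ‖g ω‖ ≤ C)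
    (a b : ℂ) (ha : UltraLim μ U f a) (hb : UltraLim μ U g b) :
    UltraLim μ U (fun ω => f ω * g ω) (a * b) := by
  refine ultraLim_of_forall_preimage_closedBall_mem (hf.mul hg) fun ε hε => ?_
  obtain ⟨δ, hδ, hmul⟩ := Metric.tendsto_nhds_nhds.1 (continuous_mul.tendsto (a, b)) ε hε
  have hfg := hU.inter_mem _ (ha.preimage_closedBall_mem hsemi hU hf hfbdd (half_pos hδ))
    _ (hb.preimage_closedBall_mem hsemi hU hg hgbdd (half_pos hδ))
  refine hU.mem_of_subset hfg (measurableSet_closedBall.preimage (hf.mul hg)) ?_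
  rintro ω ⟨hfω, hgω⟩
  have hdist : dist (f ω, g ω) (a, b) < δ :=
    max_lt ((mem_closedBall.1 hfω).trans_lt (half_lt_self hδ))
      ((mem_closedBall.1 hgω).trans_lt (half_lt_self hδ))
  exact (hmul hdist).le

/-- Theorem II.5. Ultrafilter limits are multiplicative:
the limit of a product is the product of the limits. -/
theorem ultraLim_mul {Ω : Type u} [MeasurableSpace Ω] (μ : Measure Ω)
    (hμ : μ ≠ 0) (hsemi : Semifinite μ)
    (U : Set (Set Ω)) (hU : IsMeasureUltrafilter μ U)
    (f g : Ω → ℂ) (hf : Measurable f) (hfbdd : ∃ C : ℝ, ∀ᵐ ω ∂μ, ‖f ω‖ ≤ C)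
    (hg : Measurable g) (hgbdd : ∃ C : ℝ, ∀ᵐ ω ∂μ, ‖g ω‖ ≤ C)
    (a b : ℂ) (ha : UltraLim μ U f a) (hb : UltraLim μ U g b) :
    UltraLim μ U (fun ω => f ω * g ω) (a * b) :=
  ultraLim_mul_general μ hsemi U hU f g hf hfbdd hg hgbdd a b ha hb
end

section
/- Let (Ω, Σ, μ) be a semifinite, decomposable measure space with μ ≠ 0 and let ω be a character of L^∞(Ω, μ). Then 𝒰_ω := {F ⊆ Ω measurable : ω([1_F]) = 1} is an ultrafilter on the measure algebra of (Ω, μ), and for every measurable essentially bounded f : Ω → ℂ one has lim_{𝒰_ω} f = ω([f]). -/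
open MeasureTheory

universe u

open Filter in
/-- `ℂ`-algebra structure on the algebra of germs of `ℂ`-valued functions along a filter. -/
noncomputable instance germAlgebra {α : Type*} {l : Filter α} :
    Algebra ℂ (Filter.Germ l ℂ) :=
  Algebra.ofModule
    (fun r x y => Filter.Germ.inductionOn₂ x y fun f g => by
      simp only [← Filter.Germ.coe_smul, ← Filter.Germ.coe_mul, smul_mul_assoc])
    (fun r x y => Filter.Germ.inductionOn₂ x y fun f g => by
      simp only [← Filter.Germ.coe_smul, ← Filter.Germ.coe_mul, mul_smul_comm])

/-- `L^∞(Ω, μ)`: the algebra of essentially bounded measurable functions `Ω → ℂ` modulo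
equality `μ`-almost everywhere, realized as the subalgebra of the algebra of germs along
the `μ`-a.e. filter consisting of germs of essentially bounded measurable functions. -/
noncomputable def Linfty {Ω : Type*} [MeasurableSpace Ω] (μ : Measure Ω) :
    Subalgebra ℂ (Filter.Germ (MeasureTheory.ae μ) ℂ) where
  carrier := {x | ∃ f : Ω → ℂ, Measurable f ∧ (∃ C : ℝ, ∀ᵐ ω ∂μ, ‖f ω‖ ≤ C) ∧
    x = (f : Filter.Germ (MeasureTheory.ae μ) ℂ)}
  mul_mem' := by
    rintro x y ⟨f, hf, ⟨Cf, hCf⟩, rfl⟩ ⟨g, hg, ⟨Cg, hCg⟩, rfl⟩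
    refine ⟨f * g, hf.mul hg, ⟨|Cf| * |Cg|, ?_⟩, (Filter.Germ.coe_mul f g).symm⟩
    filter_upwards [hCf, hCg] with ω h1 h2
    calc ‖(f * g) ω‖ = ‖f ω‖ * ‖g ω‖ := by simp [norm_mul]
      _ ≤ |Cf| * |Cg| :=
        mul_le_mul (h1.trans (le_abs_self _)) (h2.trans (le_abs_self _)) (norm_nonneg _)
          (abs_nonneg _)
  add_mem' := by
    rintro x y ⟨f, hf, ⟨Cf, hCf⟩, rfl⟩ ⟨g, hg, ⟨Cg, hCg⟩, rfl⟩
    refine ⟨f + g, hf.add hg, ⟨|Cf| + |Cg|, ?_⟩, (Filter.Germ.coe_add f g).symm⟩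
    filter_upwards [hCf, hCg] with ω h1 h2
    calc ‖(f + g) ω‖ ≤ ‖f ω‖ + ‖g ω‖ := norm_add_le _ _
      _ ≤ |Cf| + |Cg| := add_le_add (h1.trans (le_abs_self _)) (h2.trans (le_abs_self _))
  one_mem' :=
    ⟨fun _ => 1, measurable_const, ⟨1, Filter.Eventually.of_forall fun _ => by simp⟩,
      (Filter.Germ.coe_one (l := MeasureTheory.ae μ)).symm⟩
  zero_mem' :=
    ⟨fun _ => 0, measurable_const, ⟨0, Filter.Eventually.of_forall fun _ => by simp⟩,
      (Filter.Germ.coe_zero (l := MeasureTheory.ae μ)).symm⟩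
  algebraMap_mem' := by
    intro r
    refine ⟨fun _ => r, measurable_const,
      ⟨‖r‖, Filter.Eventually.of_forall fun _ => le_rfl⟩, ?_⟩
    rw [Algebra.algebraMap_eq_smul_one, ← Filter.Germ.coe_one (l := MeasureTheory.ae μ),
      ← Filter.Germ.coe_smul]
    congr 1
    funext ω
    simp

/-- The element of `L^∞(Ω, μ)` determined by a measurable, essentially bounded function. -/
noncomputable def LinftyMk {Ω : Type*} [MeasurableSpace Ω] (μ : Measure Ω) (f : Ω → ℂ)
    (hf : Measurable f) (C : ℝ) (hC : ∀ᵐ ω ∂μ, ‖f ω‖ ≤ C) : Linfty μ :=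
  ⟨(f : Filter.Germ (MeasureTheory.ae μ) ℂ), ⟨f, hf, ⟨C, hC⟩, rfl⟩⟩

/-- The class `[1_F]` in `L^∞(Ω, μ)` of the indicator function of a measurable set `F`. -/
noncomputable def indL {Ω : Type*} [MeasurableSpace Ω] (μ : Measure Ω) (F : Set Ω)
    (hF : MeasurableSet F) : Linfty μ :=
  LinftyMk μ (F.indicator fun _ => (1 : ℂ)) (measurable_const.indicator hF) 1
    (Filter.Eventually.of_forall fun ω => by
      by_cases h : ω ∈ F <;> simp [Set.indicator_apply, h])

/-!
Since `[1_F]` is idempotent, a character takes the value `0` or `1` on it, and the identities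
`[1_F] [1_G] = [1_{F ∩ G}]` and `[1_F] + [1_{Fᶜ}] = 1` turn multiplicativity of `ω` into the
ultrafilter axioms. For the limit, put `a = ω [f]`: on a set `F` where `δ ≤ ‖f - a‖` with
`δ > 0`, the function `f - a` has an inverse bounded by `δ⁻¹`, so `[1_F]` is a multiple of
`[f] - a ∈ ker ω` and `F ∉ 𝒰_ω`. Hence `{‖f - a‖ ≤ δ} ∈ 𝒰_ω`, and every average of `f` over a
subset of it lies in the closed ball of radius `δ` around `a` by convexity.
-/

open Filter

section Linfty

variable {Ω : Type*} [MeasurableSpace Ω] {μ : Measure Ω}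

theorem Filter.Germ.algebraMap_eq_coe {α : Type*} {l : Filter α} (a : ℂ) :
    algebraMap ℂ (Germ l ℂ) a = ↑(fun _ : α => a) := by
  rw [Algebra.algebraMap_eq_smul_one, ← Germ.coe_one, ← Germ.coe_smul]
  congr 1
  funext
  simp

@[simp]
theorem coe_LinftyMk {f : Ω → ℂ} (hf : Measurable f) {C : ℝ} (hC : ∀ᵐ x ∂μ, ‖f x‖ ≤ C) :
    (LinftyMk μ f hf C hC : Germ (ae μ) ℂ) = f :=
  rfl

@[simp]
theorem coe_indL {F : Set Ω} (hF : MeasurableSet F) :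
    (indL μ F hF : Germ (ae μ) ℂ) = ↑(F.indicator (1 : Ω → ℂ)) :=
  rfl

theorem indL_congr_ae {F G : Set Ω} (hF : MeasurableSet F) (hG : MeasurableSet G)
    (h : F =ᵐ[μ] G) : indL μ F hF = indL μ G hG :=
  Subtype.ext <| by simpa using Germ.coe_eq.mpr (indicator_ae_eq_of_ae_eq_set h)

theorem indL_eq_zero_of_measure_eq_zero {F : Set Ω} (hF : MeasurableSet F) (h : μ F = 0) :
    indL μ F hF = 0 := by
  rw [indL_congr_ae hF MeasurableSet.empty (ae_eq_empty.mpr h)]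
  exact Subtype.ext <| by simp only [coe_indL, Set.indicator_empty]; rfl

theorem indL_mul_indL {F G : Set Ω} (hF : MeasurableSet F) (hG : MeasurableSet G) :
    indL μ F hF * indL μ G hG = indL μ (F ∩ G) (hF.inter hG) :=
  Subtype.ext <| by simp [Set.inter_indicator_one]

theorem isIdempotentElem_indL {F : Set Ω} (hF : MeasurableSet F) :
    IsIdempotentElem (indL μ F hF) := by
  simp only [IsIdempotentElem, indL_mul_indL, Set.inter_self]

theorem indL_add_indL_compl {F : Set Ω} (hF : MeasurableSet F) :
    indL μ F hF + indL μ Fᶜ hF.compl = 1 :=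
  Subtype.ext <| by simp [← Germ.coe_add, Set.indicator_self_add_compl]

theorem exists_mul_sub_algebraMap_eq_indL {f : Ω → ℂ} (hf : Measurable f) {C : ℝ}
    (hC : ∀ᵐ x ∂μ, ‖f x‖ ≤ C) (a : ℂ) {δ : ℝ} (hδ : 0 < δ) {F : Set Ω} (hF : MeasurableSet F)
    (hfF : ∀ x ∈ F, δ ≤ ‖f x - a‖) :
    ∃ g : Linfty μ, g * (LinftyMk μ f hf C hC - algebraMap ℂ (Linfty μ) a) = indL μ F hF := by
  have hg_le : ∀ x, ‖F.indicator (fun x => (f x - a)⁻¹) x‖ ≤ δ⁻¹ := by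
    intro x
    by_cases hx : x ∈ F
    · simpa [hx] using inv_anti₀ hδ (hfF x hx)
    · simpa [hx] using hδ.le
  refine ⟨LinftyMk μ _ ((hf.sub_const a).inv.indicator hF) δ⁻¹ (.of_forall hg_le),
    Subtype.ext ?_⟩
  simp only [MulMemClass.coe_mul, AddSubgroupClass.coe_sub, Subalgebra.coe_algebraMap,
    Germ.algebraMap_eq_coe, coe_LinftyMk, coe_indL, ← Germ.coe_sub, ← Germ.coe_mul]
  refine Germ.coe_eq.mpr (.of_forall fun x => ?_)
  by_cases hx : x ∈ F
  · have hne : f x - a ≠ 0 := norm_pos_iff.mp (hδ.trans_le (hfF x hx))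
    simp [hx, inv_mul_cancel₀ hne]
  · simp [hx]

end Linfty

theorem norm_setAverage_sub_le {α E : Type*} [MeasurableSpace α] {μ : Measure α}
    [NormedAddCommGroup E] [NormedSpace ℝ E] [CompleteSpace E] {f : α → E} {X : Set α}
    (hX : MeasurableSet X) (hX₀ : μ X ≠ 0) (hX_top : μ X ≠ ⊤) (hf : IntegrableOn f X μ)
    {a : E} {δ : ℝ} (hfX : ∀ x ∈ X, ‖f x - a‖ ≤ δ) : ‖(⨍ x in X, f x ∂μ) - a‖ ≤ δ := by
  rw [← dist_eq_norm, ← Metric.mem_closedBall]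
  exact (convex_closedBall a δ).set_average_mem Metric.isClosed_closedBall hX₀ hX_top
    (ae_restrict_of_forall_mem hX fun x hx => by simpa [dist_eq_norm] using hfX x hx) hf

section Character

variable {Ω : Type*} [MeasurableSpace Ω] {μ : Measure Ω} (ω : Linfty μ →ₐ[ℂ] ℂ)

def characterUltrafilter : Set (Set Ω) :=
  {F | ∃ hF : MeasurableSet F, ω (indL μ F hF) = 1}

theorem character_indL_eq_zero_or_one {F : Set Ω} (hF : MeasurableSet F) :
    ω (indL μ F hF) = 0 ∨ ω (indL μ F hF) = 1 :=
  IsIdempotentElem.iff_eq_zero_or_one.mp ((isIdempotentElem_indL hF).map ω)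

theorem isMeasureUltrafilter_characterUltrafilter :
    IsMeasureUltrafilter μ (characterUltrafilter ω) where
  measurableSet_of_mem := fun _ ⟨hF, _⟩ => hF
  not_null := by
    rintro F ⟨hF, hωF⟩ hF₀
    rw [indL_eq_zero_of_measure_eq_zero hF hF₀, map_zero] at hωF
    exact zero_ne_one hωF
  inter_mem := by
    rintro F ⟨hF, hωF⟩ G ⟨hG, hωG⟩
    exact ⟨hF.inter hG, by rw [← indL_mul_indL hF hG, map_mul, hωF, hωG, one_mul]⟩
  mem_of_ae_subset := by
    rintro F ⟨hF, hωF⟩ G hG hFG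
    have hinter : (F ∩ G : Set Ω) =ᵐ[μ] F :=
      ae_eq_set.mpr ⟨by simp [Set.inter_sdiff_assoc], by rwa [Set.sdiff_self_inter]⟩
    refine ⟨hG, ?_⟩
    calc ω (indL μ G hG) = ω (indL μ F hF * indL μ G hG) := by rw [map_mul, hωF, one_mul]
      _ = ω (indL μ F hF) := by rw [indL_mul_indL, indL_congr_ae (hF.inter hG) hF hinter]
      _ = 1 := hωF
  mem_or_compl_mem := by
    intro F hF
    have hsum := congrArg ω (indL_add_indL_compl hF)
    rw [map_add, map_one] at hsum
    rcases character_indL_eq_zero_or_one ω hF with h | h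
    · exact Or.inr ⟨hF.compl, by rwa [h, zero_add] at hsum⟩
    · exact Or.inl ⟨hF, h⟩

theorem character_indL_eq_zero_of_le_norm_sub {f : Ω → ℂ} (hf : Measurable f) {C : ℝ}
    (hC : ∀ᵐ x ∂μ, ‖f x‖ ≤ C) {δ : ℝ} (hδ : 0 < δ) {F : Set Ω} (hF : MeasurableSet F)
    (hfF : ∀ x ∈ F, δ ≤ ‖f x - ω (LinftyMk μ f hf C hC)‖) : ω (indL μ F hF) = 0 := by
  obtain ⟨g, hg⟩ := exists_mul_sub_algebraMap_eq_indL hf hC _ hδ hF hfF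
  rw [← hg, map_mul, map_sub, AlgHom.commutes, Algebra.algebraMap_self, RingHom.id_apply,
    sub_self, mul_zero]

theorem ultraLim_characterUltrafilter {f : Ω → ℂ} (hf : Measurable f) {C : ℝ}
    (hC : ∀ᵐ x ∂μ, ‖f x‖ ≤ C) :
    UltraLim μ (characterUltrafilter ω) f (ω (LinftyMk μ f hf C hC)) := by
  intro ε hε
  set a := ω (LinftyMk μ f hf C hC)
  set E := {x | ‖f x - a‖ ≤ ε / 2}
  have hE : MeasurableSet E := measurableSet_le (hf.sub_const a).norm measurable_const
  have hEU : E ∈ characterUltrafilter ω := by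
    refine ((isMeasureUltrafilter_characterUltrafilter ω).mem_or_compl_mem E hE).resolve_right ?_
    rintro ⟨hEc, hωEc⟩
    have := character_indL_eq_zero_of_le_norm_sub ω hf hC (half_pos hε) hEc
      fun x hx => (not_le.mp (Set.notMem_of_mem_compl hx)).le
    exact zero_ne_one (this.symm.trans hωEc)
  refine ⟨E, hEU, fun X hXE hX hX₀ hX_top => ?_⟩
  have hfX : IntegrableOn f X μ :=
    .of_bound hX_top hf.aestronglyMeasurable.restrict C (ae_restrict_of_ae hC)
  rw [← measureReal_def, ← setAverage_eq]
  calc _ ≤ ε / 2 := norm_setAverage_sub_le hX hX₀.ne' hX_top.ne hfX fun x hx => hXE hx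
    _ < ε := half_lt_self hε

end Character

theorem character_gives_ultrafilter_and_limit_general {Ω : Type u} [MeasurableSpace Ω]
    (μ : Measure Ω) (ω : Linfty μ →ₐ[ℂ] ℂ) :
    IsMeasureUltrafilter μ {F : Set Ω | ∃ hF : MeasurableSet F, ω (indL μ F hF) = 1} ∧
    ∀ (f : Ω → ℂ) (hf : Measurable f) (C : ℝ) (hC : ∀ᵐ x ∂μ, ‖f x‖ ≤ C),
      UltraLim μ {F : Set Ω | ∃ hF : MeasurableSet F, ω (indL μ F hF) = 1} f
        (ω (LinftyMk μ f hf C hC)) :=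
  ⟨isMeasureUltrafilter_characterUltrafilter ω,
    fun _ hf _ hC => ultraLim_characterUltrafilter ω hf hC⟩

/-- Proposition II.6 and Theorem II.7, first half. Every character `ω` of
`L^∞(Ω, μ)` determines an ultrafilter `𝒰_ω = {F : ω([1_F]) = 1}` on the measure algebra,
and the ultrafilter limit along `𝒰_ω` of any measurable essentially bounded function `f`
is `ω([f])`. -/
theorem character_gives_ultrafilter_and_limit {Ω : Type u} [MeasurableSpace Ω]
    (μ : Measure Ω) (hμ : μ ≠ 0) (hsemi : Semifinite μ) (hdec : Decomposable μ)
    (ω : Linfty μ →ₐ[ℂ] ℂ) :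
    IsMeasureUltrafilter μ {F : Set Ω | ∃ hF : MeasurableSet F, ω (indL μ F hF) = 1} ∧
    ∀ (f : Ω → ℂ) (hf : Measurable f) (C : ℝ) (hC : ∀ᵐ x ∂μ, ‖f x‖ ≤ C),
      UltraLim μ {F : Set Ω | ∃ hF : MeasurableSet F, ω (indL μ F hF) = 1} f
        (ω (LinftyMk μ f hf C hC)) :=
  character_gives_ultrafilter_and_limit_general μ ω
end

section
/- Let (Ω, Σ) be a measurable space and let μ and ν be two nonzero semifinite, decomposable measures on (Ω, Σ) having the same null sets. Let 𝒰 be an ultrafilter on the (common) measure algebra, f : Ω → ℂ measurable and bounded, and a ∈ ℂ. Then lim_𝒰 f = a holds with respect to μ (ε-definition with μ-averages) if and only if lim_𝒰 f = a holds with respect to ν (ε-definition with ν-averages). -/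
open MeasureTheory

universe u

/-!
For a bounded `f`, `lim_U f = a` holds iff every level set `{x | ‖f x - a‖ ≤ ε}`
belongs to `U`, a condition that involves only `U` and not the measure. If it fails, some
`{‖f - a‖ > ε}` lies in `U`; covering the range of `f` by finitely many `ε/4`-balls, the
ultrafilter picks a piece of it on which `f` stays `ε/4`-close to a single value `c` with
`‖c - a‖ > 3ε/4`, and semifiniteness yields a subset of finite positive measure whose
average is near `c`, hence far from `a`.
-/

open Metric

section

variable {Ω : Type*} [MeasurableSpace Ω] {μ ν : Measure Ω}

lemma Semifinite.exists_subset_measure_pos_lt_top (hμ : Semifinite μ) {S : Set Ω}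
    (hS : MeasurableSet S) (hS0 : μ S ≠ 0) :
    ∃ X ⊆ S, MeasurableSet X ∧ 0 < μ X ∧ μ X < ⊤ := by
  rcases eq_top_or_lt_top (μ S) with hinf | hfin
  · exact hμ S hS hinf
  · exact ⟨S, subset_rfl, hS, pos_iff_ne_zero.2 hS0, hfin⟩

lemma dist_setAverage_le {E : Type*} [NormedAddCommGroup E] [NormedSpace ℝ E]
    [CompleteSpace E] {f : Ω → E} (hf : AEStronglyMeasurable f μ) {X : Set Ω}
    (hX : MeasurableSet X) (hX0 : μ X ≠ 0) (hXfin : μ X ≠ ⊤) {c : E} {r : ℝ}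
    (hfX : ∀ x ∈ X, dist (f x) c ≤ r) :
    dist (⨍ x in X, f x ∂μ) c ≤ r := by
  have hint : IntegrableOn f X μ :=
    Measure.integrableOn_of_bounded hXfin hf (M := ‖c‖ + r) <| ae_restrict_of_forall_mem hX
      fun x hx => (norm_le_norm_add_norm_sub' (f x) c).trans (by grw [← dist_eq_norm, hfX x hx])
  exact (convex_closedBall c r).set_average_mem isClosed_closedBall hX0 hXfin
    (ae_restrict_of_forall_mem hX hfX) hint

lemma ultraLim_iff_dist_setAverage {U : Set (Set Ω)} {f : Ω → ℂ} {a : ℂ} :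
    UltraLim μ U f a ↔ ∀ ε : ℝ, 0 < ε → ∃ F ∈ U, ∀ X : Set Ω, X ⊆ F →
      MeasurableSet X → 0 < μ X → μ X < ⊤ → dist (⨍ x in X, f x ∂μ) a < ε := by
  simp only [UltraLim, setAverage_eq, measureReal_def, dist_eq_norm]

namespace IsMeasureUltrafilter

variable {U : Set (Set Ω)}

lemma congr_null (hnull : ∀ s : Set Ω, MeasurableSet s → (μ s = 0 ↔ ν s = 0))
    (hU : IsMeasureUltrafilter μ U) : IsMeasureUltrafilter ν U where
  measurableSet_of_mem := hU.measurableSet_of_mem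
  not_null F hF h := hU.not_null F hF ((hnull F (hU.measurableSet_of_mem F hF)).2 h)
  inter_mem := hU.inter_mem
  mem_of_ae_subset F hF G hG h :=
    hU.mem_of_ae_subset F hF G hG ((hnull _ ((hU.measurableSet_of_mem F hF).diff hG)).2 h)
  mem_or_compl_mem := hU.mem_or_compl_mem

lemma inter_biInter_mem (hU : IsMeasureUltrafilter μ U) {α : Type*} (t : Finset α)
    {G : α → Set Ω} (hG : ∀ i ∈ t, G i ∈ U) {F : Set Ω} (hF : F ∈ U) :
    F ∩ ⋂ i ∈ t, G i ∈ U := by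
  classical
  induction t using Finset.induction_on with
  | empty => simpa using hF
  | insert i t _ ih =>
    rw [Finset.set_biInter_insert, Set.inter_left_comm]
    exact hU.inter_mem _ (hG i (t.mem_insert_self i)) _
      (ih fun j hj => hG j (Finset.mem_insert_of_mem hj))

lemma exists_mem_of_subset_biUnion (hU : IsMeasureUltrafilter μ U) {α : Type*} (t : Finset α)
    {S : α → Set Ω} (hS : ∀ i ∈ t, MeasurableSet (S i)) {F : Set Ω} (hF : F ∈ U)
    (hFS : F ⊆ ⋃ i ∈ t, S i) : ∃ i ∈ t, S i ∈ U := by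
  by_contra! hnot
  have hcompl : ∀ i ∈ t, (S i)ᶜ ∈ U := fun i hi =>
    (hU.mem_or_compl_mem _ (hS i hi)).resolve_left (hnot i hi)
  have hempty : F ∩ ⋂ i ∈ t, (S i)ᶜ = ∅ := by
    rw [← Set.compl_iUnion₂, ← Set.sdiff_eq, Set.sdiff_eq_empty]
    exact hFS
  exact hU.not_null _ (hU.inter_biInter_mem t hcompl hF) (by rw [hempty, measure_empty])

lemma exists_inter_preimage_ball_mem (hU : IsMeasureUltrafilter μ U) {E : Type*}
    [PseudoMetricSpace E] [MeasurableSpace E] [OpensMeasurableSpace E] {f : Ω → E}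
    (hf : Measurable f) (hb : TotallyBounded (Set.range f)) {δ : ℝ} (hδ : 0 < δ)
    {F : Set Ω} (hF : F ∈ U) : ∃ c, F ∩ f ⁻¹' ball c δ ∈ U := by
  obtain ⟨t, htfin, hcover⟩ := totallyBounded_iff.1 hb δ hδ
  obtain ⟨t, rfl⟩ := htfin.exists_finset_coe
  have hFcover : F ⊆ ⋃ c ∈ t, F ∩ f ⁻¹' ball c δ := fun x hx => by
    obtain ⟨c, hc, hxc⟩ := Set.mem_iUnion₂.1 (hcover (Set.mem_range_self x))
    exact Set.mem_iUnion₂.2 ⟨c, hc, hx, hxc⟩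
  obtain ⟨c, -, hc⟩ := hU.exists_mem_of_subset_biUnion t
    (fun c _ => (hU.measurableSet_of_mem F hF).inter (hf measurableSet_ball)) hF hFcover
  exact ⟨c, hc⟩

end IsMeasureUltrafilter

variable {U : Set (Set Ω)} {f : Ω → ℂ} {a : ℂ}

lemma ultraLim_of_forall_setOf_norm_sub_le_mem (hf : Measurable f)
    (h : ∀ ε : ℝ, 0 < ε → {x | ‖f x - a‖ ≤ ε} ∈ U) : UltraLim μ U f a := by
  refine ultraLim_iff_dist_setAverage.2 fun ε hε => ⟨_, h (ε / 2) (half_pos hε), ?_⟩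
  intro X hXF hX hX0 hXfin
  calc dist (⨍ x in X, f x ∂μ) a ≤ ε / 2 :=
        dist_setAverage_le hf.aestronglyMeasurable hX hX0.ne' hXfin.ne
          fun x hx => (dist_eq_norm _ _).trans_le (hXF hx)
    _ < ε := half_lt_self hε

lemma setOf_norm_sub_le_mem_of_ultraLim (hμ : Semifinite μ) (hU : IsMeasureUltrafilter μ U)
    (hf : Measurable f) (hb : TotallyBounded (Set.range f)) (h : UltraLim μ U f a)
    {ε : ℝ} (hε : 0 < ε) : {x | ‖f x - a‖ ≤ ε} ∈ U := by
  have hLm : MeasurableSet {x | ‖f x - a‖ ≤ ε} :=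
    measurableSet_le (hf.sub_const a).norm measurable_const
  refine (hU.mem_or_compl_mem _ hLm).resolve_right fun hfar => ?_
  obtain ⟨F, hF, havg⟩ := ultraLim_iff_dist_setAverage.1 h (ε / 4) (by positivity)
  set H := F ∩ {x | ‖f x - a‖ ≤ ε}ᶜ
  have hH : H ∈ U := hU.inter_mem F hF _ hfar
  obtain ⟨c, hS⟩ := hU.exists_inter_preimage_ball_mem hf hb (by positivity : 0 < ε / 4) hH
  set S := H ∩ f ⁻¹' ball c (ε / 4)
  have hc : 3 * ε / 4 < dist c a := by
    obtain ⟨x, ⟨-, hxfar⟩, hxc⟩ := nonempty_of_measure_ne_zero (hU.not_null S hS)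
    have hxc : dist (f x) c < ε / 4 := hxc
    have hxa : ε < dist (f x) a := by simpa [dist_eq_norm] using hxfar
    linarith [dist_triangle (f x) c a]
  obtain ⟨X, hXS, hX, hX0, hXfin⟩ :=
    hμ.exists_subset_measure_pos_lt_top (hU.measurableSet_of_mem S hS) (hU.not_null S hS)
  have hnear_a := havg X (fun x hx => (hXS hx).1.1) hX hX0 hXfin
  have hnear_c : dist (⨍ x in X, f x ∂μ) c ≤ ε / 4 :=
    dist_setAverage_le hf.aestronglyMeasurable hX hX0.ne' hXfin.ne
      fun x hx => (mem_ball.1 (hXS hx).2).le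
  linarith [dist_triangle_left c a (⨍ x in X, f x ∂μ)]

lemma ultraLim_iff_forall_setOf_norm_sub_le_mem (hμ : Semifinite μ)
    (hU : IsMeasureUltrafilter μ U) (hf : Measurable f) (hb : TotallyBounded (Set.range f)) :
    UltraLim μ U f a ↔ ∀ ε : ℝ, 0 < ε → {x | ‖f x - a‖ ≤ ε} ∈ U :=
  ⟨fun h _ hε => setOf_norm_sub_le_mem_of_ultraLim hμ hU hf hb h hε,
    ultraLim_of_forall_setOf_norm_sub_le_mem hf⟩

end

theorem ultraLim_congr_of_equiv_measures_general {Ω : Type u} [MeasurableSpace Ω]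
    (μ ν : Measure Ω)
    (hμsemi : Semifinite μ) (hνsemi : Semifinite ν)
    (hnull : ∀ s : Set Ω, MeasurableSet s → (μ s = 0 ↔ ν s = 0))
    (U : Set (Set Ω)) (hU : IsMeasureUltrafilter μ U)
    (f : Ω → ℂ) (hf : Measurable f) (C : ℝ) (hC : ∀ x, ‖f x‖ ≤ C) (a : ℂ) :
    UltraLim μ U f a ↔ UltraLim ν U f a := by
  have hb : TotallyBounded (Set.range f) := (isCompact_closedBall (0 : ℂ) C).totallyBounded.subset
    (Set.range_subset_iff.2 fun x => mem_closedBall_zero_iff.2 (hC x))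
  rw [ultraLim_iff_forall_setOf_norm_sub_le_mem hμsemi hU hf hb,
    ultraLim_iff_forall_setOf_norm_sub_le_mem hνsemi (hU.congr_null hnull) hf hb]

/-- Corollary II.8. Ultrafilter limits do not change when the measure is
replaced by an equivalent (same null sets) semifinite decomposable measure. -/
theorem ultraLim_congr_of_equiv_measures {Ω : Type u} [MeasurableSpace Ω]
    (μ ν : Measure Ω) (hμ0 : μ ≠ 0) (hν0 : ν ≠ 0)
    (hμsemi : Semifinite μ) (hνsemi : Semifinite ν)
    (hμdec : Decomposable μ) (hνdec : Decomposable ν)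
    (hnull : ∀ s : Set Ω, MeasurableSet s → (μ s = 0 ↔ ν s = 0))
    (U : Set (Set Ω)) (hU : IsMeasureUltrafilter μ U)
    (f : Ω → ℂ) (hf : Measurable f) (C : ℝ) (hC : ∀ x, ‖f x‖ ≤ C) (a : ℂ) :
    UltraLim μ U f a ↔ UltraLim ν U f a :=
  ultraLim_congr_of_equiv_measures_general μ ν hμsemi hνsemi hnull U hU f hf C hC a
end

section
/- Let Ω be a compact Hausdorff topological space equipped with its Borel σ-algebra and a probability measure μ that is inner regular with respect to compact sets and faithful (μ(U) > 0 for every nonempty open U). Let f : Ω → ℂ be a bounded measurable function, ω₀ ∈ Ω, and c ∈ ℂ such that f(ω) → c as ω → ω₀ (i.e. f tends to c along the neighborhood filter of ω₀). Then for every ultrafilter 𝒰 on the measure algebra of (Ω, μ) with 𝒟_{ω₀} ⊆ 𝒰, one has lim_𝒰 f = c. (This is the scalar-valued case of Theorem III.4.) -/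
open MeasureTheory

universe u

/-!
Every open neighbourhood `V` of `ω₀` lies in `𝒟_{ω₀} ⊆ 𝒰`. Choosing `V` inside the preimage
of the closed `ε`-ball around `c`, every average of `f` over a subset of `V` stays in that
ball, because a closed ball is convex and closed.
-/

section Average

variable {α E : Type*} [MeasurableSpace α] [NormedAddCommGroup E] [NormedSpace ℝ E]
  [CompleteSpace E] {μ : Measure α} {f : α → E} {s : Set α}

theorem setAverage_mem_closedBall_s10 {c : E} {r : ℝ} (hf : AEStronglyMeasurable f μ)
    (hs : MeasurableSet s) (hs₀ : μ s ≠ 0) (hs_fin : μ s ≠ ⊤)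
    (hfs : ∀ x ∈ s, f x ∈ Metric.closedBall c r) : ⨍ x in s, f x ∂μ ∈ Metric.closedBall c r := by
  have hfs_ae : ∀ᵐ x ∂μ.restrict s, f x ∈ Metric.closedBall c r := ae_restrict_of_forall_mem hs hfs
  have hf_int : IntegrableOn f s μ := by
    refine Measure.integrableOn_of_bounded hs_fin hf (M := ‖c‖ + r) (hfs_ae.mono fun x hx => ?_)
    simpa [add_comm] using norm_le_norm_add_const_of_dist_le (Metric.mem_closedBall.mp hx)
  exact (convex_closedBall c r).set_average_mem Metric.isClosed_closedBall hs₀ hs_fin hfs_ae hf_int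

end Average

theorem ultraLim_of_forall_exists_mem_dist_le {Ω : Type*} [MeasurableSpace Ω] {μ : Measure Ω}
    {U : Set (Set Ω)} {f : Ω → ℂ} {a : ℂ} (hf : Measurable f)
    (h : ∀ ε > 0, ∃ F ∈ U, ∀ x ∈ F, dist (f x) a ≤ ε) : UltraLim μ U f a := by
  intro ε hε
  obtain ⟨F, hFU, hF⟩ := h (ε / 2) (half_pos hε)
  refine ⟨F, hFU, fun X hXF hX hX₀ hX_fin => ?_⟩
  have hX_avg : dist (⨍ x in X, f x ∂μ) a ≤ ε / 2 :=
    setAverage_mem_closedBall_s10 hf.aestronglyMeasurable hX hX₀.ne' hX_fin.ne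
      fun x hx => hF x (hXF hx)
  rw [setAverage_eq, dist_eq_norm] at hX_avg
  exact hX_avg.trans_lt (half_lt_self hε)

theorem ultraLim_of_tendsto_nhds_general {Ω : Type u} [TopologicalSpace Ω] [MeasurableSpace Ω]
    [BorelSpace Ω] (μ : Measure Ω) (f : Ω → ℂ) (hf : Measurable f) (ω₀ : Ω) (c : ℂ)
    (hconv : Filter.Tendsto f (nhds ω₀) (nhds c)) (U : Set (Set Ω))
    (hD : {X : Set Ω | MeasurableSet X ∧ ∃ V : Set Ω, IsOpen V ∧ ω₀ ∈ V ∧ μ (V \ X) = 0}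
      ⊆ U) :
    UltraLim μ U f c := by
  have open_nhd_mem : ∀ V, IsOpen V → ω₀ ∈ V → V ∈ U := fun V hV hω₀ =>
    hD ⟨hV.measurableSet, V, hV, hω₀, by simp⟩
  refine ultraLim_of_forall_exists_mem_dist_le hf fun ε hε => ?_
  obtain ⟨V, hVf, hV, hω₀⟩ := mem_nhds_iff.mp (hconv (Metric.closedBall_mem_nhds c hε))
  exact ⟨V, open_nhd_mem V hV hω₀, hVf⟩

/-- Theorem III.4, scalar-valued case. If a bounded measurable function
`f` on a compact Hausdorff space with a faithful inner-regular Borel probability measure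
converges to `c` along the neighborhood filter of `ω₀`, then `lim_𝒰 f = c` for every
ultrafilter `𝒰` on the measure algebra containing `𝒟_{ω₀}`. -/
theorem ultraLim_of_tendsto_nhds {Ω : Type u} [TopologicalSpace Ω]
    [CompactSpace Ω] [T2Space Ω] [MeasurableSpace Ω] [BorelSpace Ω]
    (μ : Measure Ω) [IsProbabilityMeasure μ] [μ.InnerRegular]
    (hfaithful : ∀ V : Set Ω, IsOpen V → V.Nonempty → 0 < μ V)
    (f : Ω → ℂ) (hf : Measurable f) (C : ℝ) (hC : ∀ x, ‖f x‖ ≤ C)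
    (ω₀ : Ω) (c : ℂ) (hconv : Filter.Tendsto f (nhds ω₀) (nhds c))
    (U : Set (Set Ω)) (hU : IsMeasureUltrafilter μ U)
    (hD : {X : Set Ω | MeasurableSet X ∧ ∃ V : Set Ω, IsOpen V ∧ ω₀ ∈ V ∧ μ (V \ X) = 0}
      ⊆ U) :
    UltraLim μ U f c :=
  ultraLim_of_tendsto_nhds_general μ f hf ω₀ c hconv U hD
end

section
/- Fix a ∈ (0, 1) and let 𝒰 be an ultrafilter on the measure algebra of ([0,1], λ) with 𝒟_a ⊆ 𝒰. Then exactly one of the following holds: ℒ_a ⊆ 𝒰, or ℛ_a ⊆ 𝒰. -/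
open MeasureTheory

universe u

/-- Lebesgue measure on the unit interval `[0,1]`, regarded as a measure on the subtype. -/
noncomputable def lam : Measure (Set.Icc (0 : ℝ) 1) :=
  (MeasureTheory.volume : Measure ℝ).comap Subtype.val

/-- `ℒ_t`: the filter (on the measure algebra of `([0,1], λ)`) of measurable sets almost
containing a left neighborhood `(t − ε, t) ∩ [0,1]` of `t`. -/
def leftF (t : ℝ) : Set (Set (Set.Icc (0 : ℝ) 1)) :=
  {X | MeasurableSet X ∧ ∃ ε : ℝ, 0 < ε ∧
    lam ((Subtype.val ⁻¹' Set.Ioo (t - ε) t) \ X) = 0}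

/-- `ℛ_t`: the filter of measurable sets almost containing a right neighborhood
`(t, t + ε) ∩ [0,1]` of `t`. -/
def rightF (t : ℝ) : Set (Set (Set.Icc (0 : ℝ) 1)) :=
  {X | MeasurableSet X ∧ ∃ ε : ℝ, 0 < ε ∧
    lam ((Subtype.val ⁻¹' Set.Ioo t (t + ε)) \ X) = 0}

/-- `𝒟_t`: the filter of measurable sets almost containing a two-sided neighborhood
`(t − ε, t + ε) ∩ [0,1]` of `t`. -/
def twoSidedF (t : ℝ) : Set (Set (Set.Icc (0 : ℝ) 1)) :=
  {X | MeasurableSet X ∧ ∃ ε : ℝ, 0 < ε ∧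
    lam ((Subtype.val ⁻¹' Set.Ioo (t - ε) (t + ε)) \ X) = 0}

lemma lam_emb : MeasurableEmbedding (Subtype.val : Set.Icc (0:ℝ) 1 → ℝ) :=
  MeasurableEmbedding.subtype_coe measurableSet_Icc

lemma lam_apply (S : Set (Set.Icc (0:ℝ) 1)) : lam S = volume (Subtype.val '' S) :=
  lam_emb.comap_apply volume S

/-- Proposition III.10. For `0 < a < 1`, any ultrafilter on the measure
algebra of `([0,1], λ)` containing `𝒟_a` contains exactly one of `ℒ_a` and `ℛ_a`. -/
theorem ultrafilter_left_or_right (a : ℝ) (ha : a ∈ Set.Ioo (0 : ℝ) 1)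
    (U : Set (Set (Set.Icc (0 : ℝ) 1))) (hU : IsMeasureUltrafilter lam U)
    (hD : twoSidedF a ⊆ U) :
    Xor' (leftF a ⊆ U) (rightF a ⊆ U) := by
  set L : Set (Set.Icc (0:ℝ) 1) := Subtype.val ⁻¹' Set.Iio a with hLdef
  set R : Set (Set.Icc (0:ℝ) 1) := Subtype.val ⁻¹' Set.Ioi a with hRdef
  have hLm : MeasurableSet L := measurable_subtype_coe measurableSet_Iio
  have hRm : MeasurableSet R := measurable_subtype_coe measurableSet_Ioi
  -- L is in leftF, R is in rightF
  have hLF : L ∈ leftF a := by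
    refine ⟨hLm, a, ha.1, ?_⟩
    have : (Subtype.val ⁻¹' Set.Ioo (a - a) a : Set (Set.Icc (0:ℝ) 1)) \ L = ∅ := by
      rw [Set.diff_eq_empty]
      exact fun x hx => hx.2
    rw [this]; exact measure_empty
  have hRF : R ∈ rightF a := by
    refine ⟨hRm, 1 - a, by linarith [ha.2], ?_⟩
    have : (Subtype.val ⁻¹' Set.Ioo a (a + (1 - a)) : Set (Set.Icc (0:ℝ) 1)) \ R = ∅ := by
      rw [Set.diff_eq_empty]
      exact fun x hx => hx.1
    rw [this]; exact measure_empty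
  -- L and R are disjoint
  have hdisj : ∀ (_ : L ∈ U) (_ : R ∈ U), False := by
    intro hL hR
    have := hU.inter_mem L hL R hR
    have hnull := hU.not_null _ this
    apply hnull
    have : L ∩ R = ∅ := by
      ext x; simp only [Set.mem_inter_iff, Set.mem_empty_iff_false, iff_false]
      rintro ⟨h1, h2⟩
      exact lt_asymm (Set.mem_preimage.mp h1 : (x:ℝ) < a) (Set.mem_preimage.mp h2)
    rw [this]; exact measure_empty
  -- if L ∈ U then leftF a ⊆ U
  have hLimp : L ∈ U → leftF a ⊆ U := by
    intro hL X hX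
    obtain ⟨hXm, ε, hε, hnull⟩ := hX
    have hDU : (Subtype.val ⁻¹' Set.Ioo (a - ε) (a + ε) : Set (Set.Icc (0:ℝ) 1)) ∈ U := by
      apply hD
      refine ⟨measurable_subtype_coe measurableSet_Ioo, ε, hε, ?_⟩
      rw [Set.diff_self]; exact measure_empty
    have hF := hU.inter_mem _ hDU L hL
    refine hU.mem_of_ae_subset _ hF X hXm ?_
    refine measure_mono_null ?_ hnull
    rintro x ⟨⟨hx1, hx2⟩, hx3⟩
    exact ⟨⟨hx1.1, hx2⟩, hx3⟩
  -- if R ∈ U then rightF a ⊆ U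
  have hRimp : R ∈ U → rightF a ⊆ U := by
    intro hR X hX
    obtain ⟨hXm, ε, hε, hnull⟩ := hX
    have hDU : (Subtype.val ⁻¹' Set.Ioo (a - ε) (a + ε) : Set (Set.Icc (0:ℝ) 1)) ∈ U := by
      apply hD
      refine ⟨measurable_subtype_coe measurableSet_Ioo, ε, hε, ?_⟩
      rw [Set.diff_self]; exact measure_empty
    have hF := hU.inter_mem _ hDU R hR
    refine hU.mem_of_ae_subset _ hF X hXm ?_
    refine measure_mono_null ?_ hnull
    rintro x ⟨⟨hx1, hx2⟩, hx3⟩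
    exact ⟨⟨hx2, hx1.2⟩, hx3⟩
  rcases hU.mem_or_compl_mem L hLm with hL | hLc
  · left
    refine ⟨hLimp hL, fun hRsub => hdisj hL (hRsub hRF)⟩
  · have hR : R ∈ U := by
      refine hU.mem_of_ae_subset _ hLc R hRm ?_
      have hsub : Lᶜ \ R ⊆ Subtype.val ⁻¹' ({a} : Set ℝ) := by
        rintro x ⟨hx1, hx2⟩
        have h1 : a ≤ (x:ℝ) := not_lt.mp hx1
        have h2 : (x:ℝ) ≤ a := not_lt.mp hx2
        exact (le_antisymm h2 h1 : (x:ℝ) = a)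
      refine measure_mono_null hsub ?_
      rw [lam_apply]
      refine measure_mono_null (Set.image_preimage_subset _ _) ?_
      exact Real.volume_singleton
    right
    refine ⟨hRimp hR, fun hLsub => hdisj (hLsub hLF) hR⟩
end

section
/- Let Λ denote the set of characters of L^∞([0,1], λ), equipped with the topology of pointwise convergence on L^∞([0,1], λ). For every a ∈ (0,1], the set Ω_{ℒ_a} = {ω ∈ Λ : ω([1_X]) = 1 for all X ∈ ℒ_a} has empty interior in Λ, and for every a ∈ [0,1), the set Ω_{ℛ_a} = {ω ∈ Λ : ω([1_X]) = 1 for all X ∈ ℛ_a} has empty interior in Λ. -/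
open MeasureTheory

/-- A *filter on the measure algebra* of `(Ω, μ)`: a collection of measurable subsets of
`Ω` containing `Ω`, closed under intersection and under almost-everywhere enlargement. -/
structure IsMeasureFilter {Ω : Type*} [MeasurableSpace Ω] (μ : Measure Ω)
    (F : Set (Set Ω)) : Prop where
  measurableSet_of_mem : ∀ A ∈ F, MeasurableSet A
  univ_mem : Set.univ ∈ F
  inter_mem : ∀ A ∈ F, ∀ B ∈ F, A ∩ B ∈ F
  mem_of_ae_subset : ∀ A ∈ F, ∀ B : Set Ω, MeasurableSet B → μ (A \ B) = 0 → B ∈ F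

/-- The topology of pointwise convergence on the set of characters of `L^∞(Ω, μ)`. -/
noncomputable def charTop {Ω : Type*} [MeasurableSpace Ω] (μ : Measure Ω) :
    TopologicalSpace (Linfty μ →ₐ[ℂ] ℂ) :=
  TopologicalSpace.induced (fun φ => (φ : Linfty μ → ℂ)) inferInstance

/-- `Ω_ℱ`: the closed subset of the character space associated to a filter `ℱ` on the
measure algebra, consisting of those characters sending the class of the indicator of
every member of `ℱ` to `1`. -/
def OmegaF {Ω : Type*} [MeasurableSpace Ω] (μ : Measure Ω) (F : Set (Set Ω)) :
    Set (Linfty μ →ₐ[ℂ] ℂ) :=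
  {ω | ∀ (A : Set Ω) (hA : MeasurableSet A), A ∈ F → ω (indL μ A hA) = 1}

/-- `ℱ_K`: the filter on the measure algebra associated to a set `K` of characters,
consisting of the measurable sets whose indicator class is sent to `1` by every character
in `K`. -/
def FilterOf {Ω : Type*} [MeasurableSpace Ω] (μ : Measure Ω)
    (K : Set (Linfty μ →ₐ[ℂ] ℂ)) : Set (Set Ω) :=
  {A | ∃ hA : MeasurableSet A, ∀ ω ∈ K, ω (indL μ A hA) = 1}

/-!
A character `φ` of `L^∞` sends the indicator of `{|f - φ f| < δ}` to `1` for every `f` and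
`δ > 0`, since off that set `f - φ f` is invertible. Hence every neighbourhood of `φ` yields a
set `B` with `φ [1_B] = 1`, so `λ B > 0`, such that the character "limit along `𝒰`" lies in the
neighbourhood for every ultrafilter `𝒰 ∋ B` finer than the a.e. filter. If `X ∈ ℱ` has
`λ X < λ B`, an ultrafilter containing `B \ X` gives such a character killing `[1_X]`, so it is
not in `Ω_ℱ`. The one-sided filters `ℒ_a`, `ℛ_a` contain intervals of arbitrarily small length.
-/

open Filter Topology Set

namespace Linfty

variable {Ω : Type*} [MeasurableSpace Ω] {μ : Measure Ω}

noncomputable def rep (x : Linfty μ) : Ω → ℂ := x.2.choose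

lemma measurable_rep (x : Linfty μ) : Measurable (rep x) := x.2.choose_spec.1

lemma exists_ae_norm_rep_le (x : Linfty μ) : ∃ C : ℝ, ∀ᵐ ω ∂μ, ‖rep x ω‖ ≤ C :=
  x.2.choose_spec.2.1

lemma coe_eq_rep (x : Linfty μ) : (x : Germ (ae μ) ℂ) = ↑(rep x) := x.2.choose_spec.2.2

lemma coe_algebraMap (r : ℂ) :
    ((algebraMap ℂ (Linfty μ) r : Linfty μ) : Germ (ae μ) ℂ) = ↑(fun _ : Ω => r) := by
  change algebraMap ℂ (Germ (ae μ) ℂ) r = _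
  rw [Algebra.algebraMap_eq_smul_one, ← Germ.coe_one, ← Germ.coe_smul]
  congr 1
  ext
  simp

lemma coe_indL (A : Set Ω) (hA : MeasurableSet A) :
    ((indL μ A hA : Linfty μ) : Germ (ae μ) ℂ) = ↑(A.indicator (1 : Ω → ℂ)) := rfl

lemma indL_inter {A B : Set Ω} (hA : MeasurableSet A) (hB : MeasurableSet B) :
    indL μ (A ∩ B) (hA.inter hB) = indL μ A hA * indL μ B hB := by
  apply Subtype.ext
  rw [MulMemClass.coe_mul, coe_indL, coe_indL, coe_indL, ← Germ.coe_mul, inter_indicator_one]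

lemma indL_univ : indL μ univ MeasurableSet.univ = 1 := by
  apply Subtype.ext
  rw [coe_indL, OneMemClass.coe_one, indicator_univ]
  rfl

lemma indL_of_measure_eq_zero {A : Set Ω} (hA : MeasurableSet A) (h : μ A = 0) :
    indL μ A hA = 0 := by
  apply Subtype.ext
  rw [coe_indL, ZeroMemClass.coe_zero, ← Germ.coe_zero, Germ.coe_eq]
  exact (measure_eq_zero_iff_ae_notMem.1 h).mono fun ω hω => indicator_of_notMem hω _

/-- Off `{‖f‖ < δ}` the function `f` has an inverse bounded by `δ⁻¹`, which gives some `y` with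
`y * x = 1 - [1_{‖f‖ < δ}]`; and `φ` kills the left-hand side. -/
lemma char_indL_norm_lt_eq_one (φ : Linfty μ →ₐ[ℂ] ℂ) {x : Linfty μ} {f : Ω → ℂ}
    (hf : Measurable f) (hx : (x : Germ (ae μ) ℂ) = ↑f) (hφx : φ x = 0) {δ : ℝ} (hδ : 0 < δ) :
    φ (indL μ {ω | ‖f ω‖ < δ} (measurableSet_lt hf.norm measurable_const)) = 1 := by
  set A := {ω | ‖f ω‖ < δ}
  have hA : MeasurableSet A := measurableSet_lt hf.norm measurable_const
  set g : Ω → ℂ := Aᶜ.indicator fun ω => (f ω)⁻¹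
  have hg_bound : ∀ ω, ‖g ω‖ ≤ δ⁻¹ := by
    intro ω
    by_cases hω : ω ∈ A
    · simp [g, hω, hδ.le]
    · simpa [g, hω] using inv_anti₀ hδ (not_lt.1 hω)
  let y := LinftyMk μ g (hf.inv.indicator hA.compl) δ⁻¹ (.of_forall hg_bound)
  have hyx : y * x = 1 - indL μ A hA := by
    apply Subtype.ext
    rw [MulMemClass.coe_mul, AddSubgroupClass.coe_sub, OneMemClass.coe_one, hx, coe_indL,
      show (y : Germ (ae μ) ℂ) = ↑g from rfl, ← Germ.coe_mul, ← Germ.coe_one, ← Germ.coe_sub]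
    congr 1
    ext ω
    by_cases hω : ω ∈ A
    · simp [g, hω]
    · have hfω : f ω ≠ 0 := fun h => hω (by simp [A, h, hδ])
      simp [g, hω, hfω]
  have := congrArg φ hyx
  rw [map_mul, hφx, mul_zero, map_sub, map_one] at this
  exact (sub_eq_zero.1 this.symm).symm

lemma measure_ne_zero_of_char_indL_eq_one (φ : Linfty μ →ₐ[ℂ] ℂ) {B : Set Ω}
    (hB : MeasurableSet B) (h : φ (indL μ B hB) = 1) : μ B ≠ 0 := fun h0 => by
  rw [indL_of_measure_eq_zero hB h0, map_zero] at h
  exact zero_ne_one h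

def charFilter (φ : Linfty μ →ₐ[ℂ] ℂ) : Filter Ω where
  sets := {s | ∃ B, ∃ hB : MeasurableSet B, B ⊆ s ∧ φ (indL μ B hB) = 1}
  univ_sets := ⟨univ, .univ, subset_rfl, by rw [indL_univ, map_one]⟩
  sets_of_superset := fun ⟨B, hB, hBs, h⟩ hst => ⟨B, hB, hBs.trans hst, h⟩
  inter_sets := fun ⟨B, hB, hBs, h⟩ ⟨C, hC, hCt, h'⟩ =>
    ⟨B ∩ C, hB.inter hC, inter_subset_inter hBs hCt,
      by rw [indL_inter hB hC, map_mul, h, h', one_mul]⟩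

lemma tendsto_rep_charFilter (φ : Linfty μ →ₐ[ℂ] ℂ) (x : Linfty μ) :
    Tendsto (rep x) (charFilter φ) (𝓝 (φ x)) := by
  rw [Metric.tendsto_nhds]
  intro ε hε
  have hx : ((x - algebraMap ℂ (Linfty μ) (φ x) : Linfty μ) : Germ (ae μ) ℂ) =
      ↑(fun ω => rep x ω - φ x) := by
    rw [AddSubgroupClass.coe_sub, coe_eq_rep, coe_algebraMap, ← Germ.coe_sub]
    rfl
  exact ⟨_, _, fun ω hω => by simpa [dist_eq_norm] using hω,
    char_indL_norm_lt_eq_one φ ((measurable_rep x).sub_const _) hx (by simp) hε⟩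

lemma exists_tendsto_rep (𝒰 : Ultrafilter Ω) (h𝒰 : ↑𝒰 ≤ ae μ) (x : Linfty μ) :
    ∃ c, Tendsto (rep x) 𝒰 (𝓝 c) := by
  obtain ⟨C, hC⟩ := exists_ae_norm_rep_le x
  have hmem : rep x ⁻¹' Metric.closedBall 0 C ∈ 𝒰 := h𝒰 (hC.mono fun ω hω => by simpa using hω)
  obtain ⟨c, -, hc⟩ := (isCompact_closedBall (0 : ℂ) C).ultrafilter_le_nhds' (𝒰.map (rep x)) hmem
  exact ⟨c, hc⟩

lemma tendsto_limUnder_of_coe_eq {𝒰 : Ultrafilter Ω} (h𝒰 : ↑𝒰 ≤ ae μ) {x : Linfty μ}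
    {f : Ω → ℂ} (hx : (x : Germ (ae μ) ℂ) = ↑f) : Tendsto f 𝒰 (𝓝 (limUnder 𝒰 (rep x))) := by
  have hf : rep x =ᶠ[𝒰] f := (Germ.coe_eq.1 ((coe_eq_rep x).symm.trans hx)).filter_mono h𝒰
  exact (tendsto_nhds_limUnder (exists_tendsto_rep 𝒰 h𝒰 x)).congr' hf

noncomputable def ultrafilterChar (𝒰 : Ultrafilter Ω) (h𝒰 : ↑𝒰 ≤ ae μ) : Linfty μ →ₐ[ℂ] ℂ where
  toFun x := limUnder 𝒰 (rep x)
  map_one' := tendsto_nhds_unique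
    (tendsto_limUnder_of_coe_eq h𝒰 (f := 1) (by rw [OneMemClass.coe_one]; rfl)) tendsto_const_nhds
  map_zero' := tendsto_nhds_unique
    (tendsto_limUnder_of_coe_eq h𝒰 (f := 0) (by rw [ZeroMemClass.coe_zero]; rfl))
    tendsto_const_nhds
  map_mul' x y := tendsto_nhds_unique
    (tendsto_limUnder_of_coe_eq h𝒰 (f := rep x * rep y)
      (by rw [MulMemClass.coe_mul, coe_eq_rep x, coe_eq_rep y, Germ.coe_mul]))
    ((tendsto_limUnder_of_coe_eq h𝒰 (coe_eq_rep x)).mul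
      (tendsto_limUnder_of_coe_eq h𝒰 (coe_eq_rep y)))
  map_add' x y := tendsto_nhds_unique
    (tendsto_limUnder_of_coe_eq h𝒰 (f := rep x + rep y)
      (by rw [AddMemClass.coe_add, coe_eq_rep x, coe_eq_rep y, Germ.coe_add]))
    ((tendsto_limUnder_of_coe_eq h𝒰 (coe_eq_rep x)).add
      (tendsto_limUnder_of_coe_eq h𝒰 (coe_eq_rep y)))
  commutes' r := tendsto_nhds_unique
    (tendsto_limUnder_of_coe_eq h𝒰 (coe_algebraMap r)) tendsto_const_nhds

lemma tendsto_ultrafilterChar {𝒰 : Ultrafilter Ω} (h𝒰 : ↑𝒰 ≤ ae μ) {x : Linfty μ}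
    {f : Ω → ℂ} (hx : (x : Germ (ae μ) ℂ) = ↑f) :
    Tendsto f 𝒰 (𝓝 (ultrafilterChar 𝒰 h𝒰 x)) :=
  tendsto_limUnder_of_coe_eq h𝒰 hx

lemma ultrafilterChar_indL_of_compl_mem {𝒰 : Ultrafilter Ω} (h𝒰 : ↑𝒰 ≤ ae μ) {X : Set Ω}
    (hX : MeasurableSet X) (hXc : Xᶜ ∈ 𝒰) : ultrafilterChar 𝒰 h𝒰 (indL μ X hX) = 0 :=
  tendsto_nhds_unique (tendsto_ultrafilterChar h𝒰 (coe_indL X hX))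
    (tendsto_const_nhds.congr' (mem_of_superset hXc fun _ hω => (indicator_of_notMem hω _).symm))

attribute [local instance] charTop

lemma exists_indL_eq_one_forall_ultrafilterChar_mem {φ : Linfty μ →ₐ[ℂ] ℂ}
    {V : Set (Linfty μ →ₐ[ℂ] ℂ)} (hV : V ∈ 𝓝 φ) :
    ∃ B, ∃ hB : MeasurableSet B, φ (indL μ B hB) = 1 ∧
      ∀ (𝒰 : Ultrafilter Ω) (h𝒰 : ↑𝒰 ≤ ae μ), B ∈ 𝒰 → ultrafilterChar 𝒰 h𝒰 ∈ V := by
  rw [show 𝓝 φ = comap (⇑) (𝓝 ⇑φ) from nhds_induced _ _] at hV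
  obtain ⟨W, hW, hWV⟩ := hV
  obtain ⟨W', hW', hW'closed, hW'W⟩ := exists_mem_nhds_isClosed_subset hW
  obtain ⟨B, hB, hBW', hφB⟩ : (fun ω x => rep x ω) ⁻¹' W' ∈ charFilter φ :=
    tendsto_pi_nhds.2 (tendsto_rep_charFilter φ) hW'
  refine ⟨B, hB, hφB, fun 𝒰 h𝒰 hB𝒰 => hWV (hW'W ?_)⟩
  exact hW'closed.mem_of_tendsto
    (tendsto_pi_nhds.2 fun x => tendsto_ultrafilterChar h𝒰 (coe_eq_rep x))
    (mem_of_superset hB𝒰 hBW')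

theorem interior_OmegaF_eq_empty {F : Set (Set Ω)} (hF : ∀ X ∈ F, MeasurableSet X)
    (hF0 : ⨅ X ∈ F, μ X = 0) : interior (OmegaF μ F) = ∅ := by
  refine eq_empty_of_forall_notMem fun φ hφ => ?_
  obtain ⟨B, hB, hφB, hBΩ⟩ :=
    exists_indL_eq_one_forall_ultrafilterChar_mem (mem_interior_iff_mem_nhds.1 hφ)
  obtain ⟨X, hXF, hXB⟩ : ∃ X ∈ F, μ X < μ B := by
    have hB0 := (measure_ne_zero_of_char_indL_eq_one φ hB hφB).bot_lt
    simpa only [← hF0, bot_eq_zero, iInf_lt_iff, exists_prop] using hB0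
  have hBX : μ (B \ X) ≠ 0 := fun h0 =>
    hXB.not_ge (tsub_eq_zero_iff_le.1 (nonpos_iff_eq_zero.1 (h0 ▸ le_measure_sdiff)))
  have : (ae (μ.restrict (B \ X))).NeBot := ae_restrict_neBot.2 hBX
  let 𝒰 := Ultrafilter.of (ae (μ.restrict (B \ X)))
  have h𝒰 : ↑𝒰 ≤ ae μ := (Ultrafilter.of_le _).trans ae_restrict_le
  have hBX𝒰 : B \ X ∈ 𝒰 := Ultrafilter.of_le _ (ae_restrict_mem (hB.diff (hF X hXF)))
  have hX1 := hBΩ 𝒰 h𝒰 (mem_of_superset hBX𝒰 sdiff_subset) X (hF X hXF) hXF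
  rw [ultrafilterChar_indL_of_compl_mem h𝒰 _ (mem_of_superset hBX𝒰 fun _ h => h.2)] at hX1
  exact zero_ne_one hX1

end Linfty

lemma lam_preimage_Ioo_le (l r : ℝ) : lam (Subtype.val ⁻¹' Ioo l r) ≤ ENNReal.ofReal (r - l) := by
  rw [lam, comap_subtype_coe_apply measurableSet_Icc, ← Real.volume_Ioo]
  exact measure_mono (image_preimage_subset _ _)

lemma iInf_lam_eq_zero_of_forall_pos {F : Set (Set (Icc (0 : ℝ) 1))}
    (hF : ∀ η : ℝ, 0 < η → ∃ l, Subtype.val ⁻¹' Ioo l (l + η) ∈ F) : ⨅ X ∈ F, lam X = 0 := by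
  refine nonpos_iff_eq_zero.1 (ENNReal.le_of_forall_pos_le_add fun η hη _ => ?_)
  obtain ⟨l, hl⟩ := hF η hη
  calc ⨅ X ∈ F, lam X ≤ lam (Subtype.val ⁻¹' Ioo l (l + η)) := iInf₂_le _ hl
    _ ≤ 0 + η := by simpa using lam_preimage_Ioo_le l (l + η)

/-- Theorem III.15. In the spectrum `Λ` of `L^∞([0,1], λ)` (the
character space, with the topology of pointwise convergence), each of the closed sets
`Ω_{ℒ_a}` (for `0 < a ≤ 1`) and `Ω_{ℛ_a}` (for `0 ≤ a < 1`) has empty interior. -/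
theorem onesided_limit_sets_have_empty_interior :
    (∀ a : ℝ, a ∈ Set.Ioc (0 : ℝ) 1 →
      @interior _ (charTop lam) (OmegaF lam (leftF a)) = ∅) ∧
    (∀ a : ℝ, a ∈ Set.Ico (0 : ℝ) 1 →
      @interior _ (charTop lam) (OmegaF lam (rightF a)) = ∅) := by
  have hmeas (l r : ℝ) : MeasurableSet (Subtype.val ⁻¹' Ioo l r : Set (Icc (0 : ℝ) 1)) :=
    measurableSet_Ioo.preimage measurable_subtype_coe
  refine ⟨fun a _ => Linfty.interior_OmegaF_eq_empty (fun X hX => hX.1) ?_,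
    fun a _ => Linfty.interior_OmegaF_eq_empty (fun X hX => hX.1) ?_⟩
  · refine iInf_lam_eq_zero_of_forall_pos fun η hη => ⟨a - η, hmeas _ _, η, hη, ?_⟩
    simp
  · refine iInf_lam_eq_zero_of_forall_pos fun η hη => ⟨a, hmeas _ _, η, hη, ?_⟩
    simp
end

section
/- Let Ω be a compact Hausdorff topological space such that C(Ω) is norm-separable, equipped with its Borel σ-algebra and a probability measure μ that is inner regular with respect to compact sets and faithful (μ(U) > 0 for every nonempty open U). Let Λ be the set of characters of L^∞(Ω, μ) with the topology of pointwise convergence, and for ω ∈ Ω let Ω_{𝒟_ω} = {χ ∈ Λ : χ([1_X]) = 1 for all X ∈ 𝒟_ω}. If K ⊆ Λ is closed, then the set ints(K) := {ω ∈ Ω : Ω_{𝒟_ω} ∩ K ≠ ∅} is closed in Ω. -/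
open MeasureTheory

section auxlemmas

open Filter MeasureTheory

variable {Ω : Type} [MeasurableSpace Ω] {μ : Measure Ω}

lemma germ_algebraMap' {α : Type*} {l : Filter α} (r : ℂ) :
    (algebraMap ℂ (Filter.Germ l ℂ)) r = ((fun _ => r : α → ℂ) : Filter.Germ l ℂ) := by
  rw [Algebra.algebraMap_eq_smul_one, ← Filter.Germ.coe_one (l := l), ← Filter.Germ.coe_smul]
  congr 1
  funext ω
  simp

/-- Characters of `L^∞` are bounded by essential bounds. -/
lemma char_norm_le (χ : Linfty μ →ₐ[ℂ] ℂ) {f : Ω → ℂ} (hf : Measurable f) {C : ℝ}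
    (hC : ∀ᵐ ω ∂μ, ‖f ω‖ ≤ C) (x : Linfty μ)
    (hx : (x : Filter.Germ (MeasureTheory.ae μ) ℂ)
      = (f : Filter.Germ (MeasureTheory.ae μ) ℂ)) :
    ‖χ x‖ ≤ C := by
  by_contra h
  push_neg at h
  set lam := χ x with hlamdef
  have hlam : C < ‖lam‖ := h
  have hg : Measurable fun ω => (f ω - lam)⁻¹ := (hf.sub measurable_const).inv
  have hgb : ∀ᵐ ω ∂μ, ‖(f ω - lam)⁻¹‖ ≤ (‖lam‖ - C)⁻¹ := by
    filter_upwards [hC] with ω hω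
    rw [norm_inv]
    have h1 : ‖lam‖ - C ≤ ‖f ω - lam‖ := by
      have := norm_sub_norm_le lam (f ω)
      rw [norm_sub_rev] at this
      linarith
    exact inv_anti₀ (by linarith) h1
  set y : Linfty μ := LinftyMk μ _ hg _ hgb with hy
  have key : (x - algebraMap ℂ (Linfty μ) lam) * y = 1 := by
    apply Subtype.ext
    have hcoe : ((x - algebraMap ℂ (Linfty μ) lam) * y : Linfty μ).1
        = (x.1 - algebraMap ℂ (Filter.Germ (MeasureTheory.ae μ) ℂ) lam) * y.1 := rfl
    rw [hcoe, hx, germ_algebraMap']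
    have : ((f : Filter.Germ (MeasureTheory.ae μ) ℂ) - ((fun _ => lam : Ω → ℂ) :
        Filter.Germ (MeasureTheory.ae μ) ℂ)) * y.1
        = (((f - fun _ => lam) * fun ω => (f ω - lam)⁻¹ : Ω → ℂ) :
            Filter.Germ (MeasureTheory.ae μ) ℂ) := rfl
    rw [this]
    show _ = ((1 : Linfty μ) : Filter.Germ (MeasureTheory.ae μ) ℂ)
    have h1 : ((1 : Linfty μ) : Filter.Germ (MeasureTheory.ae μ) ℂ)
        = ((fun _ => (1 : ℂ) : Ω → ℂ) : Filter.Germ (MeasureTheory.ae μ) ℂ) := rfl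
    rw [h1, Filter.Germ.coe_eq]
    filter_upwards [hC] with ω hω
    have hne : f ω - lam ≠ 0 := by
      intro hzero
      rw [sub_eq_zero.mp hzero] at hω
      linarith
    simp only [Pi.mul_apply, Pi.sub_apply]
    exact mul_inv_cancel₀ hne
  have := congrArg χ key
  rw [map_mul, map_sub, AlgHom.commutes, map_one] at this
  simp only [Algebra.algebraMap_self, RingHom.id_apply, ← hlamdef, sub_self, zero_mul] at this
  exact zero_ne_one this

end auxlemmas

lemma Linfty_spec {Ω : Type} [MeasurableSpace Ω] {μ : MeasureTheory.Measure Ω} (x : Linfty μ) :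
    ∃ f : Ω → ℂ, Measurable f ∧ (∃ C : ℝ, ∀ᵐ ω ∂μ, ‖f ω‖ ≤ C) ∧
      (x : Filter.Germ (MeasureTheory.ae μ) ℂ) = (f : Filter.Germ (MeasureTheory.ae μ) ℂ) := x.2

/-- A choice of essential bound for an element of `L^∞`. -/
noncomputable def bnd {Ω : Type} [MeasurableSpace Ω] {μ : MeasureTheory.Measure Ω}
    (x : Linfty μ) : ℝ :=
  (Linfty_spec x).choose_spec.2.1.choose

lemma char_le_bnd {Ω : Type} [MeasurableSpace Ω] {μ : MeasureTheory.Measure Ω}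
    (χ : Linfty μ →ₐ[ℂ] ℂ) (x : Linfty μ) : ‖χ x‖ ≤ bnd x :=
  char_norm_le χ (Linfty_spec x).choose_spec.1
    (Linfty_spec x).choose_spec.2.1.choose_spec x (Linfty_spec x).choose_spec.2.2

set_option maxHeartbeats 1000000 in
/-- The character space of `L^∞` is compact in the topology of pointwise convergence. -/
lemma isCompact_char_univ {Ω : Type} [MeasurableSpace Ω] (μ : MeasureTheory.Measure Ω) :
    @IsCompact _ (charTop μ) (Set.univ : Set (Linfty μ →ₐ[ℂ] ℂ)) := by
  letI := charTop μ
  have hind : Topology.IsInducing (fun χ : Linfty μ →ₐ[ℂ] ℂ => (χ : Linfty μ → ℂ)) := ⟨rfl⟩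
  rw [hind.isCompact_iff, Set.image_univ]
  set e := fun χ : Linfty μ →ₐ[ℂ] ℂ => (χ : Linfty μ → ℂ) with he
  have hrange : Set.range e =
      ({φ | φ 1 = 1} ∩ {φ | φ 0 = 0} ∩
       (⋂ (a : Linfty μ) (b : Linfty μ), {φ | φ (a * b) = φ a * φ b}) ∩
       (⋂ (a : Linfty μ) (b : Linfty μ), {φ | φ (a + b) = φ a + φ b}) ∩
       (⋂ r : ℂ, {φ | φ (algebraMap ℂ (Linfty μ) r) = r}) : Set (Linfty μ → ℂ)) := by
    ext φ
    simp only [Set.mem_range, Set.mem_inter_iff, Set.mem_iInter, Set.mem_setOf_eq]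
    constructor
    · rintro ⟨χ, rfl⟩
      exact ⟨⟨⟨⟨map_one χ, map_zero χ⟩, fun a b => map_mul χ a b⟩,
        fun a b => map_add χ a b⟩, fun r => χ.commutes r⟩
    · rintro ⟨⟨⟨⟨h1, h0⟩, hm⟩, ha⟩, hc⟩
      exact ⟨{ toFun := φ, map_one' := h1, map_mul' := hm, map_zero' := h0,
               map_add' := ha, commutes' := fun r => by simpa using hc r }, rfl⟩
  have h1 : IsClosed {φ : Linfty μ → ℂ | φ 1 = 1} :=
    isClosed_eq (continuous_apply _) continuous_const
  have h0 : IsClosed {φ : Linfty μ → ℂ | φ 0 = 0} :=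
    isClosed_eq (continuous_apply _) continuous_const
  have hm : IsClosed (⋂ (a : Linfty μ) (b : Linfty μ),
      {φ : Linfty μ → ℂ | φ (a * b) = φ a * φ b}) :=
    isClosed_iInter fun a => isClosed_iInter fun b =>
      isClosed_eq (continuous_apply _) ((continuous_apply a).mul (continuous_apply b))
  have ha : IsClosed (⋂ (a : Linfty μ) (b : Linfty μ),
      {φ : Linfty μ → ℂ | φ (a + b) = φ a + φ b}) :=
    isClosed_iInter fun a => isClosed_iInter fun b =>
      isClosed_eq (continuous_apply _) ((continuous_apply a).add (continuous_apply b))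
  have hc : IsClosed (⋂ r : ℂ, {φ : Linfty μ → ℂ | φ (algebraMap ℂ (Linfty μ) r) = r}) :=
    isClosed_iInter fun r => isClosed_eq (continuous_apply _) continuous_const
  have hclosed : IsClosed (Set.range e) := by
    rw [hrange]
    exact (((h1.inter h0).inter hm).inter ha).inter hc
  have hsub : Set.range e ⊆
      Set.pi Set.univ (fun x : Linfty μ => Metric.closedBall (0 : ℂ) (bnd x)) := by
    rintro _ ⟨χ, rfl⟩ x _
    simpa [Metric.mem_closedBall, dist_zero_right] using char_le_bnd χ x
  exact IsCompact.of_isClosed_subset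
    (isCompact_univ_pi fun x => isCompact_closedBall 0 (bnd x)) hclosed hsub

/-- Corollary III.8. Let `Ω` be a compact Hausdorff space with `C(Ω)`
norm-separable, and `μ` a faithful inner-regular Borel probability measure on `Ω`. For a
closed set `K` of characters of `L^∞(Ω, μ)`, the set
`ints K = {ω : Ω | Ω_{𝒟_ω} ∩ K ≠ ∅}` is closed in `Ω`. -/
theorem ints_of_closed_isClosed {Ω : Type} [TopologicalSpace Ω]
    [CompactSpace Ω] [T2Space Ω] [MeasurableSpace Ω] [BorelSpace Ω]
    [TopologicalSpace.SeparableSpace C(Ω, ℂ)]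
    (μ : Measure Ω) [IsProbabilityMeasure μ] [μ.InnerRegular]
    (hfaithful : ∀ V : Set Ω, IsOpen V → V.Nonempty → 0 < μ V)
    (K : Set (Linfty μ →ₐ[ℂ] ℂ)) (hK : @IsClosed _ (charTop μ) K) :
    IsClosed {ω : Ω | ∃ χ ∈ K, ∀ (X : Set Ω) (hX : MeasurableSet X),
      (∃ V : Set Ω, IsOpen V ∧ ω ∈ V ∧ μ (V \ X) = 0) → χ (indL μ X hX) = 1} := by
  
  letI := charTop μ
  have hKc : IsCompact K :=
    IsCompact.of_isClosed_subset (isCompact_char_univ μ) hK (Set.subset_univ K)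
  apply isClosed_of_closure_subset
  intro ω hω
  set ι := {X : Set Ω // MeasurableSet X ∧ ∃ V : Set Ω, IsOpen V ∧ ω ∈ V ∧ μ (V \ X) = 0}
    with hι
  set t : ι → Set (Linfty μ →ₐ[ℂ] ℂ) := fun i => {χ | χ (indL μ i.1 i.2.1) = 1} with ht
  have hec : Continuous fun χ : Linfty μ →ₐ[ℂ] ℂ => (χ : Linfty μ → ℂ) :=
    continuous_induced_dom
  have htc : ∀ i, IsClosed (t i) := fun i =>
    isClosed_eq ((continuous_apply (indL μ i.1 i.2.1)).comp hec) continuous_const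
  have hfin : ∀ u : Finset ι, (K ∩ ⋂ i ∈ u, t i).Nonempty := by
    intro u
    set V : Set Ω := ⋂ i ∈ u, (i.2.2).choose with hV
    have hVopen : IsOpen V := isOpen_biInter_finset fun i _ => (i.2.2).choose_spec.1
    have hωV : ω ∈ V := Set.mem_biInter fun i _ => (i.2.2).choose_spec.2.1
    obtain ⟨ω', hω'V, χ, hχK, hχ⟩ := mem_closure_iff.mp hω V hVopen hωV
    refine ⟨χ, hχK, Set.mem_biInter fun i hi => ?_⟩
    exact hχ i.1 i.2.1 ⟨V, hVopen, hω'V,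
      measure_mono_null
        (Set.diff_subset_diff_left (Set.biInter_subset_of_mem hi)) (i.2.2).choose_spec.2.2⟩
  obtain ⟨χ, hχK, hχt⟩ := hKc.inter_iInter_nonempty t htc hfin
  refine ⟨χ, hχK, fun X hX hD => ?_⟩
  exact Set.mem_iInter.mp hχt ⟨X, hX, hD⟩
end

section
/- Let I and J be uncountable sets. Then there is no subset X ⊆ I × J satisfying both of the following: (a) for every finite F ⊆ J, the set (I × F) ∖ X is countable; and (b) for every Y ⊆ I × J satisfying (a), the set X ∖ Y is countable. Equivalently, in the Boolean algebra of subsets of I × J modulo countable sets, the family {I × F : F ⊆ J finite} has no least upper bound. -/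
/-- Section I remark, first example. For uncountable sets `I` and `J`,
the family `{I × F : F ⊆ J finite}` has no least upper bound in the Boolean algebra of
subsets of `I × J` modulo countable sets: there is no `X ⊆ I × J` that almost contains
every `I × F` (modulo countable sets) and is almost contained in every other such set. -/
theorem no_supremum_modulo_countable {I J : Type*} [Uncountable I] [Uncountable J] :
    ¬ ∃ X : Set (I × J),
      (∀ F : Set J, F.Finite → (((Set.univ : Set I) ×ˢ F) \ X).Countable) ∧
      (∀ Y : Set (I × J), (∀ F : Set J, F.Finite → (((Set.univ : Set I) ×ˢ F) \ Y).Countable) →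
        (X \ Y).Countable) := by
  rintro ⟨X, ha, hb⟩
  -- each column of X is co-countable, hence nonempty
  have hne : ∀ j : J, ∃ i : I, (i, j) ∈ X := by
    intro j
    by_contra h
    push_neg at h
    have hc : {i : I | (i, j) ∉ X}.Countable := by
      have h1 := ha {j} (Set.finite_singleton j)
      have hinj : Function.Injective (fun i : I => (i, j)) := fun a b hab => by
        simpa using congrArg Prod.fst hab
      have h2 : {i : I | (i, j) ∉ X} ⊆ (fun i : I => (i, j)) ⁻¹'
          (((Set.univ : Set I) ×ˢ ({j} : Set J)) \ X) := by
        intro i hi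
        exact ⟨⟨trivial, rfl⟩, hi⟩
      exact (h1.preimage hinj).mono h2
    have : (Set.univ : Set I).Countable := hc.mono (fun i _ => h i)
    exact (Set.not_countable_univ) this
  choose f hf using hne
  set g : J → I × J := fun j => (f j, j) with hg
  have hginj : Function.Injective g := fun a b hab => by
    simpa [hg] using congrArg Prod.snd hab
  set D : Set (I × J) := Set.range g with hD
  have hDX : D ⊆ X := by
    rintro p ⟨j, rfl⟩
    exact hf j
  -- Y := X \ D still satisfies (a)
  have hY : ∀ F : Set J, F.Finite → (((Set.univ : Set I) ×ˢ F) \ (X \ D)).Countable := by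
    intro F hF
    have hsub : ((Set.univ : Set I) ×ˢ F) \ (X \ D) ⊆
        (((Set.univ : Set I) ×ˢ F) \ X) ∪ (g '' F) := by
      rintro ⟨i, j⟩ ⟨hmem, hnd⟩
      by_cases hx : (i, j) ∈ X
      · right
        have hd : (i, j) ∈ D := by
          by_contra hdn
          exact hnd ⟨hx, hdn⟩
        obtain ⟨j', hj'⟩ := hd
        have hj2 : j' = j := congrArg Prod.snd hj'
        subst hj2
        exact ⟨j', hmem.2, hj'⟩
      · exact Or.inl ⟨hmem, hx⟩
    exact (((ha F hF)).union ((hF.image g).countable)).mono hsub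
  have hcnt := hb (X \ D) hY
  have hXD : X \ (X \ D) = D := by
    ext p
    simp only [Set.mem_diff, Set.mem_setOf_eq, not_and, not_not]
    constructor
    · rintro ⟨hx, h2⟩; exact h2 hx
    · intro hd; exact ⟨hDX hd, fun _ => hd⟩
  rw [hXD] at hcnt
  have : Countable J := by
    have := hcnt.to_subtype
    exact Countable.of_equiv _ (Equiv.ofInjective g hginj).symm
  exact (not_countable : ¬ Countable J) this
end
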